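/- arXiv:2409.17039 — 8 statements merged into one kernel-verified Lean document; each statement's English description precedes it below -/
import Mathlib

section
/- Let N ≥ 1, α₀ ∈ (0,1), let S ⊆ [N] and V̂ ∈ [0,∞) satisfy max(V̂, α₀)/(|S| ∨ 1) ≤ α₀ (the Definition 2.1 constraint at the selected threshold). Define the one-bit generalized e-values e_j = N · 1{j ∈ S}/max(V̂, α₀) for j ∈ [N]. Then the generalized e-BH procedure at level α₀ applied to (e_1,…,e_N) rejects exactly the set S. -/
/-!
STATEMENT 1 (Theorem 2.4 of the paper).

Generalized e-BH procedure: given nonnegative values `e₁,…,e_N` and a level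
`α ∈ (0,1)`, let `k̂ = max {k ∈ [N] : |{j : e j ≥ N/(αk)}| ≥ k}` (with `k̂ = 0` if no
such `k` exists); the procedure rejects `{j : e j ≥ N/(α k̂)}` when `k̂ ≥ 1` and
rejects nothing when `k̂ = 0`.

If `S ⊆ [N]` and `V̂ ≥ 0` satisfy the Definition 2.1 constraint
`max(V̂, α₀)/(|S| ∨ 1) ≤ α₀`, and `e_j = N · 1{j ∈ S} / max(V̂, α₀)`, then the
generalized e-BH procedure at level `α₀` rejects exactly `S`.
-/

/-- The `k̂` of the generalized e-BH procedure (it is `0` when no `k` qualifies,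
since `sSup ∅ = 0` in `ℕ`). -/
noncomputable def eBHkhat (N : ℕ) (α : ℝ) (e : Fin N → ℝ) : ℕ :=
  sSup {k : ℕ | 1 ≤ k ∧ k ≤ N ∧
    k ≤ (Finset.univ.filter fun j : Fin N => (N : ℝ) / (α * k) ≤ e j).card}

/-- Rejection set of the generalized e-BH procedure at level `α`. -/
noncomputable def eBH (N : ℕ) (α : ℝ) (e : Fin N → ℝ) : Finset (Fin N) :=
  if eBHkhat N α e = 0 then ∅
  else Finset.univ.filter fun j : Fin N => (N : ℝ) / (α * eBHkhat N α e) ≤ e j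

theorem stmt1 (N : ℕ) (hN : 1 ≤ N) (α₀ : ℝ) (hα : α₀ ∈ Set.Ioo (0 : ℝ) 1)
    (S : Finset (Fin N)) (V : ℝ) (hV : 0 ≤ V)
    (hcon : max V α₀ / ((max S.card 1 : ℕ) : ℝ) ≤ α₀) :
    eBH N α₀ (fun j => (N : ℝ) * (if j ∈ S then 1 else 0) / max V α₀) = S := by
  set m := max V α₀ with hm_def
  have hα0 : 0 < α₀ := hα.1
  have hm : 0 < m := lt_of_lt_of_le hα0 (le_max_right _ _)
  have hN' : (0:ℝ) < N := by exact_mod_cast hN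
  set e : Fin N → ℝ := fun j => (N : ℝ) * (if j ∈ S then 1 else 0) / m with he
  have hfilt : ∀ k : ℕ, 1 ≤ k →
      (Finset.univ.filter fun j : Fin N => (N : ℝ) / (α₀ * k) ≤ e j)
        = if m ≤ α₀ * k then S else ∅ := by
    intro k hk
    have hk' : (0:ℝ) < k := by exact_mod_cast hk
    have hαk : (0:ℝ) < α₀ * k := mul_pos hα0 hk'
    ext j
    by_cases hj : j ∈ S
    · have hej : e j = (N:ℝ) / m := by simp [he, hj]
      simp only [Finset.mem_filter, Finset.mem_univ, true_and, hej]
      rw [div_le_div_iff₀ hαk hm]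
      by_cases hc : m ≤ α₀ * k
      · simp [hc, hj]
        nlinarith
      · simp [hc]
        nlinarith [lt_of_not_ge hc]
    · have hej : e j = 0 := by simp [he, hj]
      simp only [Finset.mem_filter, Finset.mem_univ, true_and, hej]
      have : ¬ ((N:ℝ) / (α₀ * k) ≤ 0) := by
        push_neg; positivity
      by_cases hc : m ≤ α₀ * k <;> simp [hc, hj, this]
  by_cases hS : S = ∅
  · subst hS
    have hset : {k : ℕ | 1 ≤ k ∧ k ≤ N ∧
        k ≤ (Finset.univ.filter fun j : Fin N => (N : ℝ) / (α₀ * k) ≤ e j).card} = ∅ := by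
      ext k
      simp only [Set.mem_setOf_eq, Set.mem_empty_iff_false, iff_false]
      rintro ⟨hk1, hkN, hkc⟩
      rw [hfilt k hk1] at hkc
      have : (if m ≤ α₀ * k then (∅ : Finset (Fin N)) else ∅).card = 0 := by
        split <;> simp
      omega
    have hkhat : eBHkhat N α₀ e = 0 := by
      rw [eBHkhat, hset]
      exact csSup_empty
    rw [eBH, if_pos hkhat]
  · have hSne : S.Nonempty := Finset.nonempty_iff_ne_empty.mpr hS
    have hs1 : 1 ≤ S.card := Finset.one_le_card.mpr hSne
    have hsN : S.card ≤ N := by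
      have := Finset.card_le_univ S
      simpa using this
    have hmax : max S.card 1 = S.card := max_eq_left hs1
    have hs' : (0:ℝ) < S.card := by exact_mod_cast hs1
    have hcon' : m ≤ α₀ * S.card := by
      rw [hmax] at hcon
      rw [div_le_iff₀ hs'] at hcon
      linarith
    have hmem : S.card ∈ {k : ℕ | 1 ≤ k ∧ k ≤ N ∧
        k ≤ (Finset.univ.filter fun j : Fin N => (N : ℝ) / (α₀ * k) ≤ e j).card} := by
      refine ⟨hs1, hsN, ?_⟩
      rw [hfilt S.card hs1, if_pos hcon']
    have hub : ∀ k ∈ {k : ℕ | 1 ≤ k ∧ k ≤ N ∧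
        k ≤ (Finset.univ.filter fun j : Fin N => (N : ℝ) / (α₀ * k) ≤ e j).card},
        k ≤ S.card := by
      rintro k ⟨hk1, hkN, hkc⟩
      rw [hfilt k hk1] at hkc
      refine le_trans hkc ?_
      split <;> simp
    have hkhat : eBHkhat N α₀ e = S.card := by
      rw [eBHkhat]
      exact le_antisymm (csSup_le ⟨_, hmem⟩ hub) (le_csSup ⟨S.card, hub⟩ hmem)
    rw [eBH, hkhat, if_neg (by omega), hfilt S.card hs1, if_pos hcon']
end

section
/- In the multilayer e-filter setting with arbitrary values e_g^(m) ∈ [0,∞] and target levels α^(1),…,α^(M) ∈ (0,1), for each m ∈ [M] let t̂^(m) = inf{t^(m) : (t^(1),…,t^(M)) ∈ T(α^(1),…,α^(M))}. If for each m ∈ [M] there exists an element of T(α^(1),…,α^(M)) whose m-th coordinate equals t̂^(m) (in particular, when each infimum is attained), then the vector (t̂^(1),…,t̂^(M)) itself belongs to T(α^(1),…,α^(M)). -/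
open scoped ENNReal
open Filter MeasureTheory

namespace MultilayerEFilter

variable {N M : ℕ} {G : Fin M → ℕ}

/-- Candidate selection set `S(t) = {j : e_{h(m,j)}^(m) ≥ t^(m) for all m}`. -/
noncomputable def sel (h : (m : Fin M) → Fin N → Fin (G m))
    (e : (m : Fin M) → Fin (G m) → ℝ≥0∞) (t : Fin M → ℝ≥0∞) : Finset (Fin N) :=
  Finset.univ.filter fun j => ∀ m, t m ≤ e m (h m j)

/-- Induced group selection `S^(m) = {g : A_g^(m) ∩ S ≠ ∅}`. -/
noncomputable def selGrp (A : (m : Fin M) → Fin (G m) → Finset (Fin N))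
    (S : Finset (Fin N)) (m : Fin M) : Finset (Fin (G m)) :=
  Finset.univ.filter fun g => ∃ j ∈ A m g, j ∈ S

/-- Estimated FDP at layer `m`: `(G^(m)/t^(m)) / (|S^(m)(t)| ∨ 1)` (with `G/∞ = 0`). -/
noncomputable def FDPhat (A : (m : Fin M) → Fin (G m) → Finset (Fin N))
    (h : (m : Fin M) → Fin N → Fin (G m))
    (e : (m : Fin M) → Fin (G m) → ℝ≥0∞) (t : Fin M → ℝ≥0∞) (m : Fin M) : ℝ≥0∞ :=
  ((G m : ℝ≥0∞) / t m) / ((max (selGrp A (sel h e t) m).card 1 : ℕ) : ℝ≥0∞)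

/-- Admissible threshold vectors. -/
noncomputable def admissible (A : (m : Fin M) → Fin (G m) → Finset (Fin N))
    (h : (m : Fin M) → Fin N → Fin (G m))
    (e : (m : Fin M) → Fin (G m) → ℝ≥0∞) (α : Fin M → ℝ) : Set (Fin M → ℝ≥0∞) :=
  {t | (∀ m, 1 ≤ t m) ∧ ∀ m, FDPhat A h e t m ≤ ENNReal.ofReal (α m)}

/-- Threshold of the generalized e-filter: coordinatewise minimum over admissible vectors. -/
noncomputable def filterThreshold (A : (m : Fin M) → Fin (G m) → Finset (Fin N))
    (h : (m : Fin M) → Fin N → Fin (G m))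
    (e : (m : Fin M) → Fin (G m) → ℝ≥0∞) (α : Fin M → ℝ) (m : Fin M) : ℝ≥0∞ :=
  sInf {s | ∃ t ∈ admissible A h e α, t m = s}

/-- Output of the generalized e-filter. -/
noncomputable def output (A : (m : Fin M) → Fin (G m) → Finset (Fin N))
    (h : (m : Fin M) → Fin N → Fin (G m))
    (e : (m : Fin M) → Fin (G m) → ℝ≥0∞) (α : Fin M → ℝ) : Finset (Fin N) :=
  sel h e (filterThreshold A h e α)

/-- Null groups at layer `m`: groups entirely contained in the null feature set. -/
def nullGrp (A : (m : Fin M) → Fin (G m) → Finset (Fin N))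
    (H0 : Finset (Fin N)) (m : Fin M) : Finset (Fin (G m)) :=
  Finset.univ.filter fun g => A m g ⊆ H0

/-- Layer-`m` false discovery proportion of a selected feature set. -/
noncomputable def FDP (A : (m : Fin M) → Fin (G m) → Finset (Fin N))
    (H0 : Finset (Fin N)) (S : Finset (Fin N)) (m : Fin M) : ℝ≥0∞ :=
  ((selGrp A S m ∩ nullGrp A H0 m).card : ℝ≥0∞) /
    ((max (selGrp A S m).card 1 : ℕ) : ℝ≥0∞)

end MultilayerEFilter

namespace MultilayerEFilter

/-!
STATEMENT 2 (Proposition 2.5 of the paper).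

In the multilayer e-filter setting, if for each layer `m` the coordinatewise infimum
`t̂^(m)` of the admissible set is attained (there is an admissible vector whose `m`-th
coordinate equals `t̂^(m)`), then the vector `(t̂^(1),…,t̂^(M))` is itself admissible.
-/

theorem stmt2 {N M : ℕ} (hN : 1 ≤ N) (hM : 1 ≤ M) {G : Fin M → ℕ}
    (A : (m : Fin M) → Fin (G m) → Finset (Fin N))
    (h : (m : Fin M) → Fin N → Fin (G m))
    (hne : ∀ m g, (A m g).Nonempty)
    (hdisj : ∀ m, ∀ g₁ g₂ : Fin (G m), g₁ ≠ g₂ → Disjoint (A m g₁) (A m g₂))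
    (hmem : ∀ m j, j ∈ A m (h m j))
    (e : (m : Fin M) → Fin (G m) → ℝ≥0∞)
    (α : Fin M → ℝ) (hα : ∀ m, α m ∈ Set.Ioo (0 : ℝ) 1)
    (hatt : ∀ m, ∃ t ∈ admissible A h e α, t m = filterThreshold A h e α m) :
    filterThreshold A h e α ∈ admissible A h e α := by
  classical
  constructor
  · intro m
    obtain ⟨t, ht, htm⟩ := hatt m
    rw [← htm]; exact ht.1 m
  · intro m
    obtain ⟨t, ht, htm⟩ := hatt m
    have hle : ∀ m', filterThreshold A h e α m' ≤ t m' := fun m' =>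
      sInf_le ⟨t, ht, rfl⟩
    have hsub : sel h e t ⊆ sel h e (filterThreshold A h e α) := by
      intro j hj
      simp only [sel, Finset.mem_filter] at hj ⊢
      exact ⟨hj.1, fun m' => (hle m').trans (hj.2 m')⟩
    have hgrp : selGrp A (sel h e t) m ⊆ selGrp A (sel h e (filterThreshold A h e α)) m := by
      intro g hg
      simp only [selGrp, Finset.mem_filter] at hg ⊢
      obtain ⟨_, j, hj1, hj2⟩ := hg
      exact ⟨Finset.mem_univ g, j, hj1, hsub hj2⟩
    have hcard : (max (selGrp A (sel h e t) m).card 1 : ℕ) ≤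
        max (selGrp A (sel h e (filterThreshold A h e α)) m).card 1 :=
      max_le_max (Finset.card_le_card hgrp) le_rfl
    calc FDPhat A h e (filterThreshold A h e α) m
        ≤ FDPhat A h e t m := by
          unfold FDPhat
          rw [htm]
          exact ENNReal.div_le_div le_rfl (by exact_mod_cast hcard)
      _ ≤ ENNReal.ofReal (α m) := ht.2 m

end MultilayerEFilter
end

section
/- In the multilayer e-filter setting with target levels α^(1),…,α^(M) ∈ (0,1), consider the iterative algorithm that initializes t^(m) = 1/α^(m) for all m ∈ [M], and repeatedly, sweeping through m = 1,…,M, replaces t^(m) by min{s ∈ [t^(m), ∞] : (G^(m)/s)/(|S^(m)(t^(1),…,t^(m−1), s, t^(m+1),…,t^(M))| ∨ 1) ≤ α^(m)}, stopping when a full sweep leaves all coordinates unchanged. Then every updated coordinate lies in the finite set {G^(m)/(α^(m)k) : k ∈ [G^(m)]} ∪ {∞}, the algorithm terminates after at most G^(1)+G^(2)+⋯+G^(M)+1 sweeps, and the output threshold vector equals (t̂^(1),…,t̂^(M)), the vector of coordinatewise minima over the admissible set T(α^(1),…,α^(M)). -/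
open scoped ENNReal
open Filter MeasureTheory

namespace MultilayerEFilter

/-!
STATEMENT 3 (Proposition 2.6 of the paper).

The iterative generalized e-filter algorithm initializes `t^(m) = 1/α^(m)`, and
repeatedly (sweeping through `m = 1,…,M`) replaces `t^(m)` by the least
`s ∈ [t^(m), ∞]` with `(G^(m)/s)/(|S^(m)(…,s,…)| ∨ 1) ≤ α^(m)`, stopping when a
full sweep leaves all coordinates unchanged.  Every iterate's coordinates lie in
`{G^(m)/(α^(m)k) : k ∈ [G^(m)]} ∪ {∞}`, the algorithm terminates after at most
`G^(1)+⋯+G^(M)+1` sweeps, and its output is the vector of coordinatewise minima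
over the admissible set.
-/

/-- One coordinate update of the algorithm. -/
noncomputable def updateCoord {N M : ℕ} {G : Fin M → ℕ}
    (A : (m : Fin M) → Fin (G m) → Finset (Fin N))
    (h : (m : Fin M) → Fin N → Fin (G m))
    (e : (m : Fin M) → Fin (G m) → ℝ≥0∞) (α : Fin M → ℝ)
    (t : Fin M → ℝ≥0∞) (m : Fin M) : Fin M → ℝ≥0∞ :=
  Function.update t m
    (sInf {s : ℝ≥0∞ | t m ≤ s ∧
      FDPhat A h e (Function.update t m s) m ≤ ENNReal.ofReal (α m)})

/-- One full sweep through the layers `m = 1,…,M` (sequential coordinate updates). -/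
noncomputable def sweep {N M : ℕ} {G : Fin M → ℕ}
    (A : (m : Fin M) → Fin (G m) → Finset (Fin N))
    (h : (m : Fin M) → Fin N → Fin (G m))
    (e : (m : Fin M) → Fin (G m) → ℝ≥0∞) (α : Fin M → ℝ)
    (t : Fin M → ℝ≥0∞) : Fin M → ℝ≥0∞ :=
  (List.finRange M).foldl (updateCoord A h e α) t

section Proofs

variable {N M : ℕ} {G : Fin M → ℕ}
variable (A : (m : Fin M) → Fin (G m) → Finset (Fin N))
variable (h : (m : Fin M) → Fin N → Fin (G m))
variable (e : (m : Fin M) → Fin (G m) → ℝ≥0∞) (α : Fin M → ℝ)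

/-- Number of selected groups at layer `m`, at least 1 (as a natural number). -/
noncomputable def nsel (t : Fin M → ℝ≥0∞) (m : Fin M) : ℕ :=
  max (selGrp A (sel h e t) m).card 1

lemma sel_anti {t t' : Fin M → ℝ≥0∞} (htt : t ≤ t') : sel h e t' ⊆ sel h e t := by
  intro j hj
  simp only [sel, Finset.mem_filter, Finset.mem_univ, true_and] at hj ⊢
  exact fun m => le_trans (htt m) (hj m)

lemma nsel_anti {t t' : Fin M → ℝ≥0∞} (htt : t ≤ t') (m : Fin M) :
    nsel A h e t' m ≤ nsel A h e t m := by
  refine max_le_max (Finset.card_le_card ?_) le_rfl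
  intro g hg
  simp only [selGrp, Finset.mem_filter, Finset.mem_univ, true_and] at hg ⊢
  obtain ⟨j, hjA, hjS⟩ := hg
  exact ⟨j, hjA, sel_anti h e htt hjS⟩

lemma one_le_nsel (t : Fin M → ℝ≥0∞) (m : Fin M) : 1 ≤ nsel A h e t m := le_max_right _ _

lemma nsel_le {m : Fin M} (hG : 0 < G m) (t : Fin M → ℝ≥0∞) : nsel A h e t m ≤ G m := by
  refine max_le ?_ hG
  simpa using Finset.card_le_univ (selGrp A (sel h e t) m)

lemma ennreal_div_le_comm {x y z : ℝ≥0∞} (h0 : y ≠ 0) (ht : y ≠ ⊤) :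
    x / z ≤ y ↔ x / y ≤ z := by
  rcases eq_or_ne z ⊤ with rfl | hzt
  · simp [ENNReal.div_top]
  rcases eq_or_ne z 0 with rfl | hz0
  · rcases eq_or_ne x 0 with rfl | hx0
    · simp
    · rw [ENNReal.div_zero hx0]
      simp only [top_le_iff, ht, false_iff]
      intro hc
      rw [nonpos_iff_eq_zero, ENNReal.div_eq_zero_iff] at hc
      exact hc.elim hx0 ht
  · rw [ENNReal.div_le_iff hz0 hzt, ENNReal.div_le_iff' h0 ht, mul_comm]

lemma FDPhat_le_iff {b : ℝ≥0∞} (hb0 : b ≠ 0) (hbt : b ≠ ⊤) (t : Fin M → ℝ≥0∞) (m : Fin M) :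
    FDPhat A h e t m ≤ b ↔ (G m : ℝ≥0∞) / (b * (nsel A h e t m : ℕ)) ≤ t m := by
  have hn0 : ((nsel A h e t m : ℕ) : ℝ≥0∞) ≠ 0 :=
    Nat.cast_ne_zero.mpr (Nat.one_le_iff_ne_zero.mp (one_le_nsel A h e t m))
  have hnt : ((nsel A h e t m : ℕ) : ℝ≥0∞) ≠ ⊤ := ENNReal.natCast_ne_top _
  have hrfl : FDPhat A h e t m = ((G m : ℝ≥0∞) / t m) / ((nsel A h e t m : ℕ) : ℝ≥0∞) := rfl
  rw [hrfl, ENNReal.div_le_iff hn0 hnt,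
    ennreal_div_le_comm (mul_ne_zero hb0 hn0) (ENNReal.mul_ne_top hbt hnt)]

/-- The cutoff values: `G^(m)/(α^(m) k)`. -/
noncomputable def cval (G : Fin M → ℕ) (α : Fin M → ℝ) (m : Fin M) (k : ℕ) : ℝ≥0∞ :=
  (G m : ℝ≥0∞) / (ENNReal.ofReal (α m) * k)

lemma cval_anti {m : Fin M} {k k' : ℕ} (hk : k ≤ k') : cval G α m k' ≤ cval G α m k :=
  ENNReal.div_le_div_left (mul_le_mul' le_rfl (Nat.cast_le.2 hk)) _

variable {α} in
lemma FDPhat_le_alpha_iff (hα : ∀ m, α m ∈ Set.Ioo (0 : ℝ) 1) (t : Fin M → ℝ≥0∞) (m : Fin M) :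
    FDPhat A h e t m ≤ ENNReal.ofReal (α m) ↔ cval G α m (nsel A h e t m) ≤ t m :=
  FDPhat_le_iff A h e (by simpa using (hα m).1) ENNReal.ofReal_ne_top t m

variable {α} in
lemma cval_G_eq (hα : ∀ m, α m ∈ Set.Ioo (0 : ℝ) 1) {m : Fin M} (hG : 0 < G m) :
    cval G α m (G m) = (ENNReal.ofReal (α m))⁻¹ := by
  have ha0 : ENNReal.ofReal (α m) ≠ 0 := by simpa using (hα m).1
  have hat : ENNReal.ofReal (α m) ≠ ⊤ := ENNReal.ofReal_ne_top
  have hG0 : ((G m : ℕ) : ℝ≥0∞) ≠ 0 := Nat.cast_ne_zero.mpr hG.ne'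
  have hGt : ((G m : ℕ) : ℝ≥0∞) ≠ ⊤ := ENNReal.natCast_ne_top _
  rw [cval, eq_comm, ENNReal.eq_div_iff (mul_ne_zero ha0 hG0) (ENNReal.mul_ne_top hat hGt),
    mul_comm (ENNReal.ofReal (α m)), mul_assoc, ENNReal.mul_inv_cancel ha0 hat, mul_one]

/-- The set over which the coordinate update takes an infimum. -/
def Dset (t : Fin M → ℝ≥0∞) (m : Fin M) : Set ℝ≥0∞ :=
  {s : ℝ≥0∞ | t m ≤ s ∧
    FDPhat A h e (Function.update t m s) m ≤ ENNReal.ofReal (α m)}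

lemma updateCoord_eq (t : Fin M → ℝ≥0∞) (m : Fin M) :
    updateCoord A h e α t m = Function.update t m (sInf (Dset A h e α t m)) := rfl

lemma update_mono {t : Fin M → ℝ≥0∞} {m : Fin M} {s s' : ℝ≥0∞} (hss : s ≤ s') :
    Function.update t m s ≤ Function.update t m s' := by
  intro i
  rcases eq_or_ne i m with rfl | hi
  · simpa using hss
  · simp [Function.update_of_ne hi]

variable {α} in
lemma mem_Dset_iff (hα : ∀ m, α m ∈ Set.Ioo (0 : ℝ) 1) {t : Fin M → ℝ≥0∞} {m : Fin M}
    {s : ℝ≥0∞} :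
    s ∈ Dset A h e α t m ↔
      t m ≤ s ∧ cval G α m (nsel A h e (Function.update t m s) m) ≤ s := by
  rw [Dset, Set.mem_setOf_eq, FDPhat_le_alpha_iff A h e hα, Function.update_self]

variable {α} in
lemma sInf_Dset_spec (hα : ∀ m, α m ∈ Set.Ioo (0 : ℝ) 1) (t : Fin M → ℝ≥0∞) (m : Fin M) :
    sInf (Dset A h e α t m) ∈ Dset A h e α t m ∧
      sInf (Dset A h e α t m) =
        max (t m) (cval G α m (nsel A h e (Function.update t m (sInf (Dset A h e α t m))) m)) := by
  set s' := sInf (Dset A h e α t m) with hs'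
  have hts : t m ≤ s' := le_sInf fun s hs => hs.1
  have hcs : cval G α m (nsel A h e (Function.update t m s') m) ≤ s' := by
    refine le_sInf fun s hs => ?_
    have h1 : s' ≤ s := sInf_le hs
    have h3 : nsel A h e (Function.update t m s) m ≤ nsel A h e (Function.update t m s') m :=
      nsel_anti A h e (update_mono h1) m
    calc cval G α m (nsel A h e (Function.update t m s') m)
        ≤ cval G α m (nsel A h e (Function.update t m s) m) := cval_anti α h3
      _ ≤ s := ((mem_Dset_iff A h e hα).mp hs).2
  have hmem : s' ∈ Dset A h e α t m := (mem_Dset_iff A h e hα).mpr ⟨hts, hcs⟩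
  refine ⟨hmem, le_antisymm ?_ (max_le hts hcs)⟩
  refine sInf_le ((mem_Dset_iff A h e hα).mpr ⟨le_max_left _ _, ?_⟩)
  set u := max (t m) (cval G α m (nsel A h e (Function.update t m s') m)) with hu
  have hus : u ≤ s' := max_le hts hcs
  have h3 : nsel A h e (Function.update t m s') m ≤ nsel A h e (Function.update t m u) m :=
    nsel_anti A h e (update_mono hus) m
  calc cval G α m (nsel A h e (Function.update t m u) m)
      ≤ cval G α m (nsel A h e (Function.update t m s') m) := cval_anti α h3
    _ ≤ u := le_max_right _ _

lemma le_updateCoord (t : Fin M → ℝ≥0∞) (m : Fin M) : t ≤ updateCoord A h e α t m := by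
  intro i
  rcases eq_or_ne i m with rfl | hi
  · rw [updateCoord_eq, Function.update_self]
    exact le_sInf fun s hs => hs.1
  · rw [updateCoord_eq, Function.update_of_ne hi]

lemma le_foldl (l : List (Fin M)) (t : Fin M → ℝ≥0∞) :
    t ≤ List.foldl (updateCoord A h e α) t l := by
  induction l generalizing t with
  | nil => exact le_rfl
  | cons m l ih =>
      exact le_trans (le_updateCoord A h e α t m) (ih _)

lemma le_sweep (t : Fin M → ℝ≥0∞) : t ≤ sweep A h e α t := le_foldl A h e α _ t

lemma foldl_fixed (l : List (Fin M)) (t : Fin M → ℝ≥0∞)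
    (hfix : List.foldl (updateCoord A h e α) t l = t) :
    ∀ m ∈ l, updateCoord A h e α t m = t := by
  induction l generalizing t with
  | nil => intro m hm; cases hm
  | cons m l ih =>
      intro m' hm'
      have h1 : t ≤ updateCoord A h e α t m := le_updateCoord A h e α t m
      have h2 : updateCoord A h e α t m ≤ t := by
        calc updateCoord A h e α t m
            ≤ List.foldl (updateCoord A h e α) (updateCoord A h e α t m) l :=
              le_foldl A h e α l _
          _ = t := hfix
      have heq : updateCoord A h e α t m = t := le_antisymm h2 h1
      have hfl : List.foldl (updateCoord A h e α) t l = t := by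
        have := hfix
        rw [List.foldl_cons, heq] at this
        exact this
      rcases List.mem_cons.mp hm' with rfl | hm'
      · exact heq
      · exact ih t hfl m' hm'

end Proofs

theorem stmt3 {N M : ℕ} (hN : 1 ≤ N) (hM : 1 ≤ M) {G : Fin M → ℕ}
    (A : (m : Fin M) → Fin (G m) → Finset (Fin N))
    (h : (m : Fin M) → Fin N → Fin (G m))
    (hne : ∀ m g, (A m g).Nonempty)
    (hdisj : ∀ m, ∀ g₁ g₂ : Fin (G m), g₁ ≠ g₂ → Disjoint (A m g₁) (A m g₂))
    (hmem : ∀ m j, j ∈ A m (h m j))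
    (e : (m : Fin M) → Fin (G m) → ℝ≥0∞)
    (α : Fin M → ℝ) (hα : ∀ m, α m ∈ Set.Ioo (0 : ℝ) 1)
    (t0 : Fin M → ℝ≥0∞) (ht0 : ∀ m, t0 m = (ENNReal.ofReal (α m))⁻¹) :
    (∀ k : ℕ, ∀ m : Fin M,
      ((sweep A h e α)^[k] t0) m = ⊤ ∨
        ∃ k' ∈ Finset.Icc 1 (G m),
          ((sweep A h e α)^[k] t0) m = (G m : ℝ≥0∞) / (ENNReal.ofReal (α m) * k')) ∧
    (∃ k ≤ ∑ m, G m,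
      (sweep A h e α)^[k + 1] t0 = (sweep A h e α)^[k] t0) ∧
    ((sweep A h e α)^[(∑ m, G m) + 1] t0 = filterThreshold A h e α) := by
  have hG : ∀ m, 0 < G m := fun m => Fin.pos (h m ⟨0, hN⟩)
  set u : ℕ → Fin M → ℝ≥0∞ := fun k => (sweep A h e α)^[k] t0 with hu
  have husucc : ∀ k, u (k + 1) = sweep A h e α (u k) := fun k =>
    Function.iterate_succ_apply' _ _ _
  -- the invariant: every coordinate is ⊤ or of the form G/(α k)
  have hupd : ∀ t : Fin M → ℝ≥0∞,
      (∀ m, t m = ⊤ ∨ ∃ k' ∈ Finset.Icc 1 (G m), t m = cval G α m k') →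
      ∀ m₀ m, updateCoord A h e α t m₀ m = ⊤ ∨
        ∃ k' ∈ Finset.Icc 1 (G m), updateCoord A h e α t m₀ m = cval G α m k' := by
    intro t ht m₀ m
    rcases eq_or_ne m m₀ with rfl | hm
    · rw [updateCoord_eq, Function.update_self]
      obtain ⟨-, hmax⟩ := sInf_Dset_spec A h e hα t m
      rcases max_choice (t m)
          (cval G α m (nsel A h e (Function.update t m (sInf (Dset A h e α t m))) m)) with
        hc | hc
      · rw [hmax, hc]; exact ht m
      · rw [hmax, hc]
        refine Or.inr ⟨nsel A h e (Function.update t m (sInf (Dset A h e α t m))) m,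
          Finset.mem_Icc.mpr ⟨one_le_nsel A h e _ m, nsel_le A h e (hG m) _⟩, rfl⟩
    · rw [updateCoord_eq, Function.update_of_ne hm]; exact ht m
  have hfoldinv : ∀ (l : List (Fin M)) (t : Fin M → ℝ≥0∞),
      (∀ m, t m = ⊤ ∨ ∃ k' ∈ Finset.Icc 1 (G m), t m = cval G α m k') →
      ∀ m, List.foldl (updateCoord A h e α) t l m = ⊤ ∨
        ∃ k' ∈ Finset.Icc 1 (G m), List.foldl (updateCoord A h e α) t l m = cval G α m k' := by
    intro l
    induction l with
    | nil => exact fun t ht => ht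
    | cons m₀ l ih => exact fun t ht => ih _ (hupd t ht m₀)
  have hinv : ∀ k m, u k m = ⊤ ∨ ∃ k' ∈ Finset.Icc 1 (G m), u k m = cval G α m k' := by
    intro k
    induction k with
    | zero =>
        intro m
        refine Or.inr ⟨G m, Finset.mem_Icc.mpr ⟨hG m, le_rfl⟩, ?_⟩
        show t0 m = cval G α m (G m)
        rw [ht0 m, cval_G_eq hα (hG m)]
    | succ k ih =>
        rw [husucc]
        exact hfoldinv (List.finRange M) (u k) ih
  -- the potential function
  set rnk : Fin M → ℝ≥0∞ → ℕ := fun m x =>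
    ((Finset.Icc 1 (G m)).filter fun k => cval G α m k < x).card with hrnk
  set pot : (Fin M → ℝ≥0∞) → ℕ := fun t => ∑ m, rnk m (t m) with hpot
  have rnk_mono : ∀ m {x x' : ℝ≥0∞}, x ≤ x' → rnk m x ≤ rnk m x' := by
    intro m x x' hxx
    refine Finset.card_le_card fun k hk => ?_
    simp only [Finset.mem_filter] at hk ⊢
    exact ⟨hk.1, lt_of_lt_of_le hk.2 hxx⟩
  have rnk_strict : ∀ m {x x' : ℝ≥0∞},
      (x = ⊤ ∨ ∃ k' ∈ Finset.Icc 1 (G m), x = cval G α m k') → x < x' →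
      rnk m x < rnk m x' := by
    intro m x x' hx hlt
    rcases hx with rfl | ⟨k, hk, rfl⟩
    · exact absurd hlt not_top_lt
    · refine Finset.card_lt_card ?_
      rw [Finset.ssubset_iff_of_subset (fun j hj => ?_)]
      · refine ⟨k, Finset.mem_filter.mpr ⟨hk, hlt⟩, fun hc => ?_⟩
        exact lt_irrefl _ (Finset.mem_filter.mp hc).2
      · simp only [Finset.mem_filter] at hj ⊢
        exact ⟨hj.1, lt_of_lt_of_le hj.2 hlt.le⟩
  have pot_le : ∀ t, pot t ≤ ∑ m, G m := by
    intro t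
    refine Finset.sum_le_sum fun m _ => ?_
    refine le_trans (Finset.card_filter_le _ _) (le_of_eq ?_)
    simp [Nat.card_Icc]
  have pot_strict : ∀ t t' : Fin M → ℝ≥0∞,
      (∀ m, t m = ⊤ ∨ ∃ k' ∈ Finset.Icc 1 (G m), t m = cval G α m k') →
      t ≤ t' → t ≠ t' → pot t < pot t' := by
    intro t t' hinvt hle hne2
    have hex : ∃ m, t m ≠ t' m := by
      by_contra hcon
      push_neg at hcon
      exact hne2 (funext hcon)
    obtain ⟨m₀, hm₀⟩ := hex
    exact Finset.sum_lt_sum (fun m _ => rnk_mono m (hle m))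
      ⟨m₀, Finset.mem_univ _, rnk_strict m₀ (hinvt m₀) (lt_of_le_of_ne (hle m₀) hm₀)⟩
  -- termination
  have hterm : ∃ k ≤ ∑ m, G m, u (k + 1) = u k := by
    by_contra hc
    push_neg at hc
    have grow : ∀ j, j ≤ (∑ m, G m) + 1 → j ≤ pot (u j) := by
      intro j
      induction j with
      | zero => exact fun _ => Nat.zero_le _
      | succ j ih =>
          intro hj
          have hj' : j ≤ ∑ m, G m := Nat.lt_succ_iff.mp hj
          have h1 : pot (u j) < pot (u (j + 1)) := by
            refine pot_strict _ _ (hinv j) ?_ ?_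
            · rw [husucc]; exact le_sweep A h e α (u j)
            · exact fun hh => hc j hj' hh.symm
          have h2 := ih (Nat.le_of_succ_le hj)
          omega
    have h3 := grow ((∑ m, G m) + 1) le_rfl
    have h4 := pot_le (u ((∑ m, G m) + 1))
    omega
  refine ⟨hinv, hterm, ?_⟩
  -- the fixed point equals the filter threshold
  obtain ⟨k, hkK, hfix⟩ := hterm
  have hstable : ∀ n, u (k + n) = u k := by
    intro n
    induction n with
    | zero => rfl
    | succ n ih =>
        calc u (k + (n + 1)) = sweep A h e α (u (k + n)) := husucc (k + n)
          _ = sweep A h e α (u k) := by rw [ih]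
          _ = u (k + 1) := (husucc k).symm
          _ = u k := hfix
  have hT : u ((∑ m, G m) + 1) = u k := by
    have hsplit : (∑ m, G m) + 1 = k + ((∑ m, G m) + 1 - k) := by omega
    rw [hsplit, hstable]
  have hfixT : sweep A h e α (u k) = u k := by rw [← husucc]; exact hfix
  have hcoord : ∀ m, updateCoord A h e α (u k) m = u k := fun m =>
    foldl_fixed A h e α (List.finRange M) (u k) hfixT m (List.mem_finRange m)
  have hsInfT : ∀ m, sInf (Dset A h e α (u k) m) = u k m := by
    intro m
    have hcf := congrFun (hcoord m) m
    rwa [updateCoord_eq, Function.update_self] at hcf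
  have ht0le : ∀ n, t0 ≤ u n := by
    intro n
    induction n with
    | zero => exact le_rfl
    | succ n ih =>
        refine le_trans ih ?_
        rw [husucc]
        exact le_sweep A h e α (u n)
  have hTadm : u k ∈ admissible A h e α := by
    constructor
    · intro m
      have h1 : (1 : ℝ≥0∞) ≤ t0 m := by
        rw [ht0 m]
        exact ENNReal.one_le_inv.mpr (ENNReal.ofReal_le_one.mpr (hα m).2.le)
      exact le_trans h1 (ht0le k m)
    · intro m
      have hmem := (sInf_Dset_spec A h e hα (u k) m).1
      rw [hsInfT m] at hmem
      have h2 := hmem.2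
      rwa [Function.update_eq_self] at h2
  have hlb : ∀ t', t' ∈ admissible A h e α → ∀ n, u n ≤ t' := by
    intro t' ht'
    have hbase : t0 ≤ t' := by
      intro m
      rw [ht0 m, ← cval_G_eq hα (hG m)]
      have h1 := (FDPhat_le_alpha_iff A h e hα t' m).mp (ht'.2 m)
      exact le_trans (cval_anti α (nsel_le A h e (hG m) t')) h1
    have hstep : ∀ t : Fin M → ℝ≥0∞, t ≤ t' → ∀ m, updateCoord A h e α t m ≤ t' := by
      intro t htle m i
      rcases eq_or_ne i m with rfl | hi
      · rw [updateCoord_eq, Function.update_self]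
        refine sInf_le ((mem_Dset_iff A h e hα).mpr ⟨htle i, ?_⟩)
        have hle2 : Function.update t i (t' i) ≤ t' := by
          intro j
          rcases eq_or_ne j i with rfl | hj
          · simp
          · rw [Function.update_of_ne hj]; exact htle j
        have h3 : nsel A h e t' i ≤ nsel A h e (Function.update t i (t' i)) i :=
          nsel_anti A h e hle2 i
        have h1 := (FDPhat_le_alpha_iff A h e hα t' i).mp (ht'.2 i)
        exact le_trans (cval_anti α h3) h1
      · rw [updateCoord_eq, Function.update_of_ne hi]; exact htle i
    have hfold : ∀ (l : List (Fin M)) (t : Fin M → ℝ≥0∞), t ≤ t' →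
        List.foldl (updateCoord A h e α) t l ≤ t' := by
      intro l
      induction l with
      | nil => exact fun t ht => ht
      | cons m l ih => exact fun t ht => ih _ (hstep t ht m)
    intro n
    induction n with
    | zero => exact hbase
    | succ n ih =>
        rw [husucc]
        exact hfold _ _ ih
  rw [show (sweep A h e α)^[(∑ m, G m) + 1] t0 = u ((∑ m, G m) + 1) from rfl, hT]
  funext m
  simp only [filterThreshold]
  refine le_antisymm ?_ ?_
  · refine le_sInf ?_
    rintro s ⟨t', ht', rfl⟩
    exact hlb t' ht' k m
  · exact sInf_le ⟨u k, hTadm, rfl⟩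
end MultilayerEFilter
end

section
/- In the multilayer e-filter setting with target levels α^(1),…,α^(M) ∈ (0,1), let (t̂^(1),…,t̂^(M)) denote the vector of coordinatewise minima over the admissible set T(α^(1),…,α^(M)) (assumed attained). Suppose a threshold vector t = (t^(1),…,t^(M)) ∈ [1,∞]^M satisfies t^(m) ≤ t̂^(m) for every m ∈ [M]. Then for every m ∈ [M], the updated m-th coordinate min{s ∈ [t^(m), ∞] : (G^(m)/s)/(|S^(m)(t^(1),…,t^(m−1), s, t^(m+1),…,t^(M))| ∨ 1) ≤ α^(m)} is still less than or equal to t̂^(m). -/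
open scoped ENNReal
open Filter MeasureTheory

namespace MultilayerEFilter

/-!
STATEMENT 4 (prudence property from the proof of Proposition 2.6).

Let `t̂` be the vector of coordinatewise minima over the admissible set (assumed
attained, i.e. `t̂` is admissible and is a coordinatewise lower bound for all
admissible vectors).  If a threshold vector `t ∈ [1,∞]^M` satisfies `t^(m) ≤ t̂^(m)`
for every `m`, then each coordinate update
`min{s ∈ [t^(m), ∞] : (G^(m)/s)/(|S^(m)(…,s,…)| ∨ 1) ≤ α^(m)}` is still `≤ t̂^(m)`.
-/

/-- The updated value of the `m`-th coordinate. -/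
noncomputable def updatedValue {N M : ℕ} {G : Fin M → ℕ}
    (A : (m : Fin M) → Fin (G m) → Finset (Fin N))
    (h : (m : Fin M) → Fin N → Fin (G m))
    (e : (m : Fin M) → Fin (G m) → ℝ≥0∞) (α : Fin M → ℝ)
    (t : Fin M → ℝ≥0∞) (m : Fin M) : ℝ≥0∞ :=
  sInf {s : ℝ≥0∞ | t m ≤ s ∧
    FDPhat A h e (Function.update t m s) m ≤ ENNReal.ofReal (α m)}

theorem stmt4 {N M : ℕ} (hN : 1 ≤ N) (hM : 1 ≤ M) {G : Fin M → ℕ}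
    (A : (m : Fin M) → Fin (G m) → Finset (Fin N))
    (h : (m : Fin M) → Fin N → Fin (G m))
    (hne : ∀ m g, (A m g).Nonempty)
    (hdisj : ∀ m, ∀ g₁ g₂ : Fin (G m), g₁ ≠ g₂ → Disjoint (A m g₁) (A m g₂))
    (hmem : ∀ m j, j ∈ A m (h m j))
    (e : (m : Fin M) → Fin (G m) → ℝ≥0∞)
    (α : Fin M → ℝ) (hα : ∀ m, α m ∈ Set.Ioo (0 : ℝ) 1)
    (tHat : Fin M → ℝ≥0∞)
    (htHatAdm : tHat ∈ admissible A h e α)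
    (htHatMin : ∀ t' ∈ admissible A h e α, ∀ m, tHat m ≤ t' m)
    (t : Fin M → ℝ≥0∞) (ht1 : ∀ m, 1 ≤ t m) (htle : ∀ m, t m ≤ tHat m) :
    ∀ m, updatedValue A h e α t m ≤ tHat m := by
  intro m
  apply sInf_le
  refine ⟨htle m, ?_⟩
  have hsub : sel h e tHat ⊆ sel h e (Function.update t m (tHat m)) := by
    intro j hj
    simp only [sel, Finset.mem_filter, Finset.mem_univ, true_and] at hj ⊢
    intro m'
    by_cases hm : m' = m
    · subst hm; rw [Function.update_self]; exact hj m'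
    · rw [Function.update_of_ne hm]; exact le_trans (htle m') (hj m')
  have hgrp : selGrp A (sel h e tHat) m ⊆
      selGrp A (sel h e (Function.update t m (tHat m))) m := by
    intro g hg
    simp only [selGrp, Finset.mem_filter, Finset.mem_univ, true_and] at hg ⊢
    obtain ⟨j, hj1, hj2⟩ := hg
    exact ⟨j, hj1, hsub hj2⟩
  have hcard := Finset.card_le_card hgrp
  have h2 := htHatAdm.2 m
  unfold FDPhat at h2 ⊢
  rw [Function.update_self]
  refine le_trans ?_ h2
  exact ENNReal.div_le_div_left (by exact_mod_cast max_le_max hcard le_rfl) _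

end MultilayerEFilter
end

section
/- In the multilayer e-filter setting with real-valued nonnegative e_g^(m) and null structure, let t = (t^(1),…,t^(M)) ∈ T(α^(1),…,α^(M)). Then for every m ∈ [M] with t^(m) < ∞, the layer-m false discovery proportion of the candidate selection set S(t) satisfies |S^(m)(t) ∩ H0^(m)|/(|S^(m)(t)| ∨ 1) ≤ (α^(m)/G^(m)) · Σ_{g∈H0^(m)} t^(m)·1{e_g^(m) ≥ t^(m)} ≤ (α^(m)/G^(m)) · Σ_{g∈H0^(m)} e_g^(m). -/
open scoped ENNReal
open Filter MeasureTheory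

/-!
Every selected group `g` at layer `m` contains a selected feature `j`, and since the groups
partition the features, `h m j = g`; hence `t^(m) ≤ e_g^(m)`. So the selected null groups are
among the null groups whose e-value passes the threshold, and admissibility
`G^(m) / (t^(m) (|S^(m)| ∨ 1)) ≤ α^(m)` turns `1 / (|S^(m)| ∨ 1)` into `α^(m) t^(m) / G^(m)`.
-/

theorem ENNReal.inv_le_mul_div_of_div_div_le {G t D a : ℝ≥0∞} (hG : G ≠ 0) (hGtop : G ≠ ⊤)
    (ht : t ≠ 0) (httop : t ≠ ⊤) (hle : G / t / D ≤ a) : D⁻¹ ≤ a * t / G := by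
  rw [ENNReal.le_div_iff_mul_le (.inl hG) (.inl hGtop), ← ENNReal.div_le_iff ht httop]
  calc D⁻¹ * G / t = G / t / D := by simp only [div_eq_mul_inv]; ring
    _ ≤ a := hle

namespace MultilayerEFilter

variable {N M : ℕ} {G : Fin M → ℕ} {A : (m : Fin M) → Fin (G m) → Finset (Fin N)}
  {h : (m : Fin M) → Fin N → Fin (G m)}

theorem eq_of_mem_group (hdisj : ∀ m, ∀ g₁ g₂ : Fin (G m), g₁ ≠ g₂ → Disjoint (A m g₁) (A m g₂))
    (hmem : ∀ m j, j ∈ A m (h m j)) {m : Fin M} {g : Fin (G m)} {j : Fin N} (hj : j ∈ A m g) :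
    h m j = g := by
  by_contra hne
  exact Finset.disjoint_left.mp (hdisj m _ _ hne) (hmem m j) hj

theorem le_of_mem_selGrp_sel
    (hdisj : ∀ m, ∀ g₁ g₂ : Fin (G m), g₁ ≠ g₂ → Disjoint (A m g₁) (A m g₂))
    (hmem : ∀ m j, j ∈ A m (h m j)) {e : (m : Fin M) → Fin (G m) → ℝ≥0∞} {t : Fin M → ℝ≥0∞}
    {m : Fin M} {g : Fin (G m)} (hg : g ∈ selGrp A (sel h e t) m) : t m ≤ e m g := by
  obtain ⟨j, hjA, hjS⟩ := (Finset.mem_filter.mp hg).2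
  rw [← eq_of_mem_group hdisj hmem hjA]
  exact (Finset.mem_filter.mp hjS).2 m

theorem FDP_sel_le_mul_sum
    (hdisj : ∀ m, ∀ g₁ g₂ : Fin (G m), g₁ ≠ g₂ → Disjoint (A m g₁) (A m g₂))
    (hmem : ∀ m j, j ∈ A m (h m j)) (H0 : Finset (Fin N)) {e : (m : Fin M) → Fin (G m) → ℝ≥0∞}
    {t : Fin M → ℝ≥0∞} {m : Fin M} {a : ℝ≥0∞} (ht : t m ≠ 0) (httop : t m ≠ ⊤)
    (hhat : FDPhat A h e t m ≤ a) :
    FDP A H0 (sel h e t) m ≤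
      a / G m * ∑ g ∈ nullGrp A H0 m, if t m ≤ e m g then t m else 0 := by
  rcases eq_or_ne (G m) 0 with hG | hG
  · have : IsEmpty (Fin (G m)) := hG ▸ Fin.isEmpty'
    simp [FDP, Finset.eq_empty_of_isEmpty]
  set c := (selGrp A (sel h e t) m ∩ nullGrp A H0 m).card
  set n := ((nullGrp A H0 m).filter fun g => t m ≤ e m g).card
  set D := (max (selGrp A (sel h e t) m).card 1 : ℕ)
  have hcard : (c : ℝ≥0∞) ≤ n := by
    refine Nat.cast_le.mpr (Finset.card_le_card fun g hg => ?_)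
    obtain ⟨hsel, hnull⟩ := Finset.mem_inter.mp hg
    exact Finset.mem_filter.mpr ⟨hnull, le_of_mem_selGrp_sel hdisj hmem hsel⟩
  have hinv : (D : ℝ≥0∞)⁻¹ ≤ a * t m / G m :=
    ENNReal.inv_le_mul_div_of_div_div_le (by exact_mod_cast hG) (ENNReal.natCast_ne_top _)
      ht httop hhat
  rw [FDP, div_eq_mul_inv, ← Finset.sum_filter, Finset.sum_const, nsmul_eq_mul]
  calc (c : ℝ≥0∞) * (D : ℝ≥0∞)⁻¹ ≤ n * (a * t m / G m) := mul_le_mul' hcard hinv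
    _ = a / G m * (n * t m) := by simp only [div_eq_mul_inv]; ring

theorem stmt5_general {N M : ℕ} {G : Fin M → ℕ}
    (A : (m : Fin M) → Fin (G m) → Finset (Fin N))
    (h : (m : Fin M) → Fin N → Fin (G m))
    (hdisj : ∀ m, ∀ g₁ g₂ : Fin (G m), g₁ ≠ g₂ → Disjoint (A m g₁) (A m g₂))
    (hmem : ∀ m j, j ∈ A m (h m j))
    (H0 : Finset (Fin N))
    (e : (m : Fin M) → Fin (G m) → ℝ≥0∞)
    (α : Fin M → ℝ)
    (t : Fin M → ℝ≥0∞) (ht : t ∈ admissible A h e α) :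
    ∀ m, t m ≠ ⊤ →
      FDP A H0 (sel h e t) m ≤
        ENNReal.ofReal (α m) / (G m : ℝ≥0∞) *
          ∑ g ∈ nullGrp A H0 m, (if t m ≤ e m g then t m else 0) ∧
      ENNReal.ofReal (α m) / (G m : ℝ≥0∞) *
          ∑ g ∈ nullGrp A H0 m, (if t m ≤ e m g then t m else 0) ≤
        ENNReal.ofReal (α m) / (G m : ℝ≥0∞) * ∑ g ∈ nullGrp A H0 m, e m g := by
  intro m httop
  obtain ⟨hone, hhat⟩ := ht
  have ht : t m ≠ 0 := (zero_lt_one.trans_le (hone m)).ne'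
  refine ⟨FDP_sel_le_mul_sum hdisj hmem H0 ht httop (hhat m), ?_⟩
  gcongr with g
  split_ifs with hle
  exacts [hle, zero_le]

theorem stmt5 {N M : ℕ} (hN : 1 ≤ N) (hM : 1 ≤ M) {G : Fin M → ℕ}
    (A : (m : Fin M) → Fin (G m) → Finset (Fin N))
    (h : (m : Fin M) → Fin N → Fin (G m))
    (hne : ∀ m g, (A m g).Nonempty)
    (hdisj : ∀ m, ∀ g₁ g₂ : Fin (G m), g₁ ≠ g₂ → Disjoint (A m g₁) (A m g₂))
    (hmem : ∀ m j, j ∈ A m (h m j))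
    (H0 : Finset (Fin N))
    (e : (m : Fin M) → Fin (G m) → ℝ≥0∞) (hfin : ∀ m g, e m g ≠ ⊤)
    (α : Fin M → ℝ) (hα : ∀ m, α m ∈ Set.Ioo (0 : ℝ) 1)
    (t : Fin M → ℝ≥0∞) (ht : t ∈ admissible A h e α) :
    ∀ m, t m ≠ ⊤ →
      FDP A H0 (sel h e t) m ≤
        ENNReal.ofReal (α m) / (G m : ℝ≥0∞) *
          ∑ g ∈ nullGrp A H0 m, (if t m ≤ e m g then t m else 0) ∧
      ENNReal.ofReal (α m) / (G m : ℝ≥0∞) *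
          ∑ g ∈ nullGrp A H0 m, (if t m ≤ e m g then t m else 0) ≤
        ENNReal.ofReal (α m) / (G m : ℝ≥0∞) * ∑ g ∈ nullGrp A H0 m, e m g :=
  stmt5_general A h hdisj hmem H0 e α t ht

end MultilayerEFilter
end

section
/- On a probability space, in the multilayer e-filter setting with null structure, suppose the e_g^(m) are nonnegative real random variables such that E[e_g^(m)] ≤ 1 for every m ∈ [M] and every g ∈ H0^(m) (i.e., the null e-values are e-variables). Let S be the output of the generalized e-filter at levels α^(1),…,α^(M) ∈ (0,1). Then for every m ∈ [M], FDR^(m) ≤ π₀^(m) α^(m) ≤ α^(m), where π₀^(m) = |H0^(m)|/G^(m). -/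
open scoped ENNReal
open Filter MeasureTheory

namespace MultilayerEFilter


lemma pointwise_bound {N M : ℕ} {G : Fin M → ℕ}
    (A : (m : Fin M) → Fin (G m) → Finset (Fin N))
    (h : (m : Fin M) → Fin N → Fin (G m))
    (hdisj : ∀ m, ∀ g₁ g₂ : Fin (G m), g₁ ≠ g₂ → Disjoint (A m g₁) (A m g₂))
    (hmem : ∀ m j, j ∈ A m (h m j))
    (H0 : Finset (Fin N))
    (e : (m : Fin M) → Fin (G m) → ℝ≥0∞)
    (α : Fin M → ℝ) (hα : ∀ m, α m ∈ Set.Ioo (0 : ℝ) 1) (m : Fin M)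
    (hG : 0 < G m) :
    FDP A H0 (output A h e α) m ≤
      ∑ g ∈ nullGrp A H0 m, ENNReal.ofReal (α m) * e m g / (G m : ℝ≥0∞) := by
  set a : ℝ≥0∞ := ENNReal.ofReal (α m) with ha_def
  have ha0 : a ≠ 0 := (ENNReal.ofReal_pos.mpr (hα m).1).ne'
  have haT : a ≠ ∞ := ENNReal.ofReal_ne_top
  set t0 : Fin M → ℝ≥0∞ := filterThreshold A h e α with ht0_def
  set S : Finset (Fin N) := sel h e t0 with hS_def
  have hout : output A h e α = S := rfl
  set D : ℕ := max (selGrp A S m).card 1 with hD_def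
  have hD0 : ((D : ℕ) : ℝ≥0∞) ≠ 0 := by
    simp [hD_def]
  have hDT : ((D : ℕ) : ℝ≥0∞) ≠ ∞ := ENNReal.natCast_ne_top _
  have hG0 : ((G m : ℕ) : ℝ≥0∞) ≠ 0 := by
    exact_mod_cast Nat.cast_ne_zero.mpr hG.ne'
  have hGT : ((G m : ℕ) : ℝ≥0∞) ≠ ∞ := ENNReal.natCast_ne_top _
  -- t0 is below every admissible vector
  have ht0le : ∀ k, ∀ t ∈ admissible A h e α, t0 k ≤ t k := by
    intro k t ht
    exact sInf_le ⟨t, ht, rfl⟩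
  -- selection at t0 contains selection at every admissible t
  have hsub : ∀ t ∈ admissible A h e α, sel h e t ⊆ S := by
    intro t ht j hj
    have hj' : ∀ k, t k ≤ e k (h k j) := by
      simpa only [sel, Finset.mem_filter, Finset.mem_univ, true_and] using hj
    simp only [hS_def, sel, Finset.mem_filter, Finset.mem_univ, true_and]
    exact fun k => le_trans (ht0le k t ht) (hj' k)
  have hDle : ∀ t ∈ admissible A h e α,
      ((max (selGrp A (sel h e t) m).card 1 : ℕ) : ℝ≥0∞) ≤ ((D : ℕ) : ℝ≥0∞) := by
    intro t ht
    have hsg : selGrp A (sel h e t) m ⊆ selGrp A S m := by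
      intro g hg
      simp only [selGrp, Finset.mem_filter, Finset.mem_univ, true_and] at hg ⊢
      obtain ⟨j, hj1, hj2⟩ := hg
      exact ⟨j, hj1, hsub t ht hj2⟩
    exact_mod_cast max_le_max (Finset.card_le_card hsg) le_rfl
  -- key inequality : G ≤ a * D * t0 m
  have hkey : ((G m : ℕ) : ℝ≥0∞) ≤ a * D * t0 m := by
    have hinf : ((G m : ℕ) : ℝ≥0∞) / (a * D) ≤ t0 m := by
      apply le_sInf
      rintro s ⟨t, ht, rfl⟩
      have h1 : ((G m : ℕ) : ℝ≥0∞) / t m / D ≤ a := by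
        refine le_trans (le_trans ?_ (ht.2 m)) le_rfl
        exact ENNReal.div_le_div_left (hDle t ht) _
      have h2 : ((G m : ℕ) : ℝ≥0∞) / t m ≤ a * D :=
        (ENNReal.div_le_iff_le_mul (Or.inl hD0) (Or.inl hDT)).1 h1
      have ht1 : (1 : ℝ≥0∞) ≤ t m := ht.1 m
      have h3 : ((G m : ℕ) : ℝ≥0∞) ≤ a * D * t m :=
        (ENNReal.div_le_iff_le_mul (Or.inl (by positivity)) (Or.inr (mul_ne_zero ha0 hD0))).1 h2
      refine (ENNReal.div_le_iff_le_mul (Or.inl (mul_ne_zero ha0 hD0))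
        (Or.inl (ENNReal.mul_ne_top haT hDT))).2 ?_
      rwa [mul_comm]
    have := (ENNReal.div_le_iff_le_mul (Or.inl (mul_ne_zero ha0 hD0))
      (Or.inl (ENNReal.mul_ne_top haT hDT))).1 hinf
    rwa [mul_comm] at this
  -- every selected group has e-value at least t0 m
  have hsel : ∀ g ∈ selGrp A S m, t0 m ≤ e m g := by
    intro g hg
    simp only [selGrp, Finset.mem_filter, Finset.mem_univ, true_and] at hg
    obtain ⟨j, hj1, hj2⟩ := hg
    have hj3 : ∀ k, t0 k ≤ e k (h k j) := by
      simpa only [hS_def, sel, Finset.mem_filter, Finset.mem_univ, true_and] using hj2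
    have hgeq : h m j = g := by
      by_contra hne
      exact (Finset.disjoint_left.mp (hdisj m g (h m j) (Ne.symm hne))) hj1 (hmem m j)
    rw [← hgeq]
    exact hj3 m
  -- per-group bound
  have hper : ∀ g ∈ selGrp A S m, (1 : ℝ≥0∞) / D ≤ a * e m g / (G m : ℝ≥0∞) := by
    intro g hg
    rw [ENNReal.le_div_iff_mul_le (Or.inl hG0) (Or.inl hGT), one_div, mul_comm,
      ← div_eq_mul_inv, ENNReal.div_le_iff_le_mul (Or.inl hD0) (Or.inl hDT)]
    calc ((G m : ℕ) : ℝ≥0∞) ≤ a * D * t0 m := hkey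
      _ ≤ a * D * e m g := mul_le_mul_right (hsel g hg) _
      _ = a * e m g * D := by ring
  -- put it together
  rw [hout, FDP]
  have hcard : (((selGrp A S m ∩ nullGrp A H0 m).card : ℕ) : ℝ≥0∞) / D =
      ∑ _g ∈ selGrp A S m ∩ nullGrp A H0 m, (1 : ℝ≥0∞) / D := by
    have hcast : (((selGrp A S m ∩ nullGrp A H0 m).card : ℕ) : ℝ≥0∞) =
        ∑ _g ∈ selGrp A S m ∩ nullGrp A H0 m, (1 : ℝ≥0∞) := by simp
    rw [hcast, div_eq_mul_inv, Finset.sum_mul]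
    simp [div_eq_mul_inv]
  rw [hcard]
  calc (∑ _g ∈ selGrp A S m ∩ nullGrp A H0 m, (1 : ℝ≥0∞) / D)
      ≤ ∑ g ∈ selGrp A S m ∩ nullGrp A H0 m, a * e m g / (G m : ℝ≥0∞) := by
        refine Finset.sum_le_sum fun g hg => hper g (Finset.mem_of_mem_inter_left hg)
    _ ≤ ∑ g ∈ nullGrp A H0 m, a * e m g / (G m : ℝ≥0∞) :=
        Finset.sum_le_sum_of_subset Finset.inter_subset_right

/-!
STATEMENT 6 (first bullet of Lemma 2.7).

If the null e-values are e-variables (`E[e_g^(m)] ≤ 1` for every `m` and every null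
group `g`), then the output of the generalized e-filter at levels
`α^(1),…,α^(M) ∈ (0,1)` satisfies `FDR^(m) ≤ π₀^(m) α^(m) ≤ α^(m)` for every `m`,
where `π₀^(m) = |H0^(m)|/G^(m)`.
-/

theorem stmt6 {N M : ℕ} (hN : 1 ≤ N) (hM : 1 ≤ M) {G : Fin M → ℕ}
    (A : (m : Fin M) → Fin (G m) → Finset (Fin N))
    (h : (m : Fin M) → Fin N → Fin (G m))
    (hne : ∀ m g, (A m g).Nonempty)
    (hdisj : ∀ m, ∀ g₁ g₂ : Fin (G m), g₁ ≠ g₂ → Disjoint (A m g₁) (A m g₂))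
    (hmem : ∀ m j, j ∈ A m (h m j))
    (H0 : Finset (Fin N))
    {Ω : Type*} [MeasurableSpace Ω] (P : Measure Ω) [IsProbabilityMeasure P]
    (e : Ω → (m : Fin M) → Fin (G m) → ℝ≥0∞)
    (hmeas : ∀ m g, Measurable fun ω => e ω m g)
    (hfin : ∀ ω m g, e ω m g ≠ ⊤)
    (hEvar : ∀ m, ∀ g ∈ nullGrp A H0 m, ∫⁻ ω, e ω m g ∂P ≤ 1)
    (α : Fin M → ℝ) (hα : ∀ m, α m ∈ Set.Ioo (0 : ℝ) 1) :
    ∀ m, (∫⁻ ω, FDP A H0 (output A h (e ω) α) m ∂P) ≤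
        ENNReal.ofReal (((nullGrp A H0 m).card : ℝ) / (G m : ℝ) * α m) ∧
      ((nullGrp A H0 m).card : ℝ) / (G m : ℝ) * α m ≤ α m := by
  intro m
  have hGm : 0 < G m := (h m ⟨0, hN⟩).pos
  have hc : (nullGrp A H0 m).card ≤ G m := by
    simpa using Finset.card_le_univ (nullGrp A H0 m)
  constructor
  · set a : ℝ≥0∞ := ENNReal.ofReal (α m) with ha_def
    calc (∫⁻ ω, FDP A H0 (output A h (e ω) α) m ∂P)
        ≤ ∫⁻ ω, ∑ g ∈ nullGrp A H0 m, a * e ω m g / (G m : ℝ≥0∞) ∂P := by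
          refine lintegral_mono fun ω =>
            pointwise_bound A h hdisj hmem H0 (e ω) α hα m hGm
      _ = ∑ g ∈ nullGrp A H0 m, ∫⁻ ω, a * e ω m g / (G m : ℝ≥0∞) ∂P := by
          refine lintegral_finset_sum _ fun g _ => ?_
          exact ((hmeas m g).const_mul a).div_const _
      _ ≤ ∑ _g ∈ nullGrp A H0 m, a / (G m : ℝ≥0∞) := by
          refine Finset.sum_le_sum fun g hg => ?_
          have hrw : (fun ω => a * e ω m g / (G m : ℝ≥0∞)) =
              fun ω => a / (G m : ℝ≥0∞) * e ω m g := by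
            funext ω
            rw [div_eq_mul_inv, div_eq_mul_inv]
            ring
          rw [hrw, lintegral_const_mul _ (hmeas m g)]
          calc a / (G m : ℝ≥0∞) * ∫⁻ ω, e ω m g ∂P
              ≤ a / (G m : ℝ≥0∞) * 1 := mul_le_mul_right (hEvar m g hg) _
            _ = a / (G m : ℝ≥0∞) := mul_one _
      _ = ((nullGrp A H0 m).card : ℝ≥0∞) * (a / (G m : ℝ≥0∞)) := by
          rw [Finset.sum_const, nsmul_eq_mul]
      _ = ENNReal.ofReal (((nullGrp A H0 m).card : ℝ) / (G m : ℝ) * α m) := by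
          rw [ENNReal.ofReal_mul (by positivity),
            ENNReal.ofReal_div_of_pos (by exact_mod_cast hGm),
            ENNReal.ofReal_natCast, ENNReal.ofReal_natCast, div_eq_mul_inv,
            div_eq_mul_inv, ← ha_def]
          ring
  · have h1 : ((nullGrp A H0 m).card : ℝ) / (G m : ℝ) ≤ 1 := by
      rw [div_le_one (by exact_mod_cast hGm)]
      exact_mod_cast hc
    exact mul_le_of_le_one_left (le_of_lt (hα m).1) h1


end MultilayerEFilter
end

section
/- For each k ∈ ℕ, let H0,k be a finite index set with |H0,k| → ∞ as k → ∞, and let (T_{g,k})_{g∈H0,k} be real random variables on a probability space such that (a) t ↦ L_k^0(t) := (1/|H0,k|) Σ_{g∈H0,k} P(T_{g,k} > t) is continuous on ℝ for each k, and (b) there exist constants c > 0 and λ ∈ (0,2), not depending on k, with Σ_{g≠h∈H0,k} Cov(1{T_{g,k} > t}, 1{T_{h,k} > t}) ≤ c·|H0,k|^λ for all t ∈ ℝ. Define L̂_k^0(t) = (1/|H0,k|) Σ_{g∈H0,k} 1{T_{g,k} > t}. Then sup_{t∈ℝ} |L̂_k^0(t) − L_k^0(t)| → 0 in probability as k → ∞.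 If moreover the null vector (T_{g,k})_{g∈H0,k} has the same joint distribution as (−T_{g,k})_{g∈H0,k}, then also sup_{t∈ℝ} |V̂_k^0(t) − L_k^0(t)| → 0 in probability, where V̂_k^0(t) = (1/|H0,k|) Σ_{g∈H0,k} 1{T_{g,k} < −t}. -/
open MeasureTheory Filter ProbabilityTheory

noncomputable def cov16 {Ω : Type*} [MeasurableSpace Ω] (X Y : Ω → ℝ) (P : Measure Ω) : ℝ :=
  (∫ ω, X ω * Y ω ∂P) - (∫ ω, X ω ∂P) * (∫ ω, Y ω ∂P)

/-!
Fix `k`. At a single threshold `t`, the variance of `∑_g 1{t < T_g}` is at most `n/4` (diagonal)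
plus `c n^λ` (off-diagonal), so Chebyshev's inequality makes `|L̂(t) - L(t)| ≥ a` have
probability `O((n + n^λ) / (n a)²) → 0`. Since `L` is continuous and decreases from `1` to `0`,
there are points `s_i` with `L(s_i) = 1 - i/N`; as `L̂` and `L` are both antitone, the supremum
over all `t` exceeds the maximum over these `N - 1` points by at most `1/N`, and a union bound
finishes. The statement for `V̂` is the first one applied to `-T`: by the sign symmetry, `-T` has
the same mean survival function and the same indicator covariances as `T`.
-/

open Topology

section Chebyshev

variable {Ω : Type*} [MeasurableSpace Ω] {P : Measure Ω} [IsProbabilityMeasure P]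

lemma covariance_eq_cov16 {X Y : Ω → ℝ} (hX : MemLp X 2 P) (hY : MemLp Y 2 P) :
    cov[X, Y; P] = cov16 X Y P :=
  covariance_eq_sub hX hY

theorem measure_le_abs_sum_sub_integral_le {ι : Type*} [Fintype ι] [DecidableEq ι]
    {X : ι → Ω → ℝ} (hXm : ∀ i, Measurable (X i)) (hX : ∀ i ω, X i ω ∈ Set.Icc 0 1)
    {C : ℝ} (hC : ∑ i, ∑ j ∈ Finset.univ.erase i, cov16 (X i) (X j) P ≤ C)
    {a : ℝ} (ha : 0 < a) :
    P {ω | a ≤ |∑ i, X i ω - ∑ i, ∫ ω', X i ω' ∂P|}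
      ≤ ENNReal.ofReal ((Fintype.card ι / 4 + C) / a ^ 2) := by
  have hL2 : ∀ i, MemLp (X i) 2 P := fun i =>
    MemLp.of_bound (hXm i).aestronglyMeasurable 1 (ae_of_all _ fun ω => by
      rw [Real.norm_eq_abs, abs_le]; constructor <;> linarith [(hX i ω).1, (hX i ω).2])
  have hvar_le : ∀ i, Var[X i; P] ≤ 1 / 4 := fun i =>
    (variance_le_sq_of_bounded (ae_of_all _ (hX i)) (hXm i).aemeasurable).trans_eq (by norm_num)
  have hvar : Var[fun ω => ∑ i, X i ω; P] ≤ Fintype.card ι / 4 + C := by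
    rw [← covariance_self (by fun_prop), covariance_fun_sum_fun_sum hL2 hL2]
    calc ∑ i, ∑ j, cov[X i, X j; P]
        = ∑ i, Var[X i; P] + ∑ i, ∑ j ∈ Finset.univ.erase i, cov16 (X i) (X j) P := by
          rw [← Finset.sum_add_distrib]
          refine Finset.sum_congr rfl fun i _ => ?_
          rw [← Finset.add_sum_erase _ _ (Finset.mem_univ i),
            covariance_self (hXm i).aemeasurable]
          simp only [covariance_eq_cov16 (hL2 i) (hL2 _)]
      _ ≤ ∑ _i : ι, 1 / 4 + C := by gcongr with i; exact hvar_le i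
      _ = Fintype.card ι / 4 + C := by simp [div_eq_mul_inv]
  have hmean : P[fun ω => ∑ i, X i ω] = ∑ i, ∫ ω, X i ω ∂P :=
    integral_finsetSum _ fun i _ => (hL2 i).integrable one_le_two
  calc P {ω | a ≤ |∑ i, X i ω - ∑ i, ∫ ω', X i ω' ∂P|}
      ≤ ENNReal.ofReal (Var[fun ω => ∑ i, X i ω; P] / a ^ 2) := by
        rw [← hmean]; exact meas_ge_le_variance_div_sq (memLp_finsetSum _ fun i _ => hL2 i) ha
    _ ≤ ENNReal.ofReal ((Fintype.card ι / 4 + C) / a ^ 2) := by gcongr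

end Chebyshev

noncomputable def empiricalSurvival {n : ℕ} (x : Fin n → ℝ) (t : ℝ) : ℝ :=
  (1 / (n : ℝ)) * ((Finset.univ.filter fun g => t < x g).card : ℝ)

noncomputable def meanSurvival {Ω : Type*} [MeasurableSpace Ω] (P : Measure Ω) {n : ℕ}
    (T : Ω → Fin n → ℝ) (t : ℝ) : ℝ :=
  (1 / (n : ℝ)) * ∑ g, (P {ω | t < T ω g}).toReal

section Survival

variable {n : ℕ}

lemma antitone_empiricalSurvival (x : Fin n → ℝ) : Antitone (empiricalSurvival x) :=
  fun _ _ hst => by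
    unfold empiricalSurvival
    gcongr

lemma empiricalSurvival_mem_Icc (x : Fin n → ℝ) (t : ℝ) :
    empiricalSurvival x t ∈ Set.Icc 0 1 := by
  rw [empiricalSurvival, one_div_mul_eq_div]
  refine ⟨by positivity, div_le_one_of_le₀ ?_ n.cast_nonneg⟩
  exact_mod_cast (Finset.card_filter_le _ _).trans_eq (Finset.card_fin n)

lemma empiricalSurvival_eq_sum (x : Fin n → ℝ) (t : ℝ) :
    empiricalSurvival x t = (1 / (n : ℝ)) * ∑ g, if t < x g then 1 else 0 := by
  rw [empiricalSurvival, Finset.natCast_card_filter]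

variable {Ω : Type*} [MeasurableSpace Ω] {P : Measure Ω} [IsProbabilityMeasure P]
  {T : Ω → Fin n → ℝ}

lemma measureReal_lt_eq_one_sub_cdf {X : Ω → ℝ} (hX : Measurable X) (t : ℝ) :
    (P {ω | t < X ω}).toReal = 1 - cdf (P.map X) t := by
  have : IsProbabilityMeasure (P.map X) := Measure.isProbabilityMeasure_map hX.aemeasurable
  rw [cdf_eq_real, map_measureReal_apply hX measurableSet_Iic, ← probReal_compl_eq_one_sub
    (hX measurableSet_Iic)]
  congr 2
  ext ω
  simp

lemma meanSurvival_eq_cdf (hT : ∀ g, Measurable fun ω => T ω g) (t : ℝ) :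
    meanSurvival P T t = (1 / (n : ℝ)) * ∑ g, (1 - cdf (P.map fun ω => T ω g) t) := by
  simp only [meanSurvival, measureReal_lt_eq_one_sub_cdf (hT _)]

lemma antitone_meanSurvival (hT : ∀ g, Measurable fun ω => T ω g) :
    Antitone (meanSurvival P T) := fun s t hst => by
  simp only [meanSurvival_eq_cdf hT]
  gcongr

lemma meanSurvival_mem_Icc (t : ℝ) : meanSurvival P T t ∈ Set.Icc 0 1 := by
  rw [meanSurvival, one_div_mul_eq_div]
  refine ⟨by positivity, div_le_one_of_le₀ ?_ n.cast_nonneg⟩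
  calc ∑ g, (P {ω | t < T ω g}).toReal ≤ ∑ _g : Fin n, (1 : ℝ) :=
        Finset.sum_le_sum fun g _ => measureReal_le_one
    _ = n := by simp

lemma exists_meanSurvival_eq (hn : 0 < n) (hT : ∀ g, Measurable fun ω => T ω g)
    (hcont : Continuous (meanSurvival P T)) {v : ℝ} (hv : v ∈ Set.Ioo 0 1) :
    ∃ t, meanSurvival P T t = v := by
  have hn' : (n : ℝ) ≠ 0 := by positivity
  have hlim (l : Filter ℝ) (c : ℝ)
      (hc : ∀ g, Tendsto (cdf (P.map fun ω => T ω g)) l (𝓝 c)) :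
      Tendsto (meanSurvival P T) l (𝓝 (1 - c)) := by
    have := ((tendsto_finsetSum Finset.univ fun g _ => (hc g).const_sub 1).const_mul
      (1 / (n : ℝ)))
    rw [Finset.sum_const, Finset.card_univ, Fintype.card_fin, nsmul_eq_mul, ← mul_assoc,
      one_div_mul_cancel hn', one_mul] at this
    exact this.congr fun t => (meanSurvival_eq_cdf hT t).symm
  have hbot := hlim atBot 0 fun g => tendsto_cdf_atBot _
  have htop := hlim atTop 1 fun g => tendsto_cdf_atTop _
  rw [sub_zero] at hbot
  rw [sub_self] at htop
  exact mem_range_of_exists_le_of_exists_ge hcont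
    ((htop.eventually (ge_mem_nhds hv.1)).exists) ((hbot.eventually (le_mem_nhds hv.2)).exists)

end Survival

section Grid

lemma exists_grid_bracket (s : ℕ → ℝ) {N : ℕ} (hN : 0 < N) (t : ℝ) :
    ∃ i < N, (i = 0 ∨ s i ≤ t) ∧ (i + 1 = N ∨ t < s (i + 1)) := by
  classical
  have hex : ∃ i, i + 1 = N ∨ t < s (i + 1) := ⟨N - 1, Or.inl (by omega)⟩
  refine ⟨Nat.find hex, ?_, ?_, Nat.find_spec hex⟩
  · have := Nat.find_min' hex (Or.inl (by omega) : N - 1 + 1 = N ∨ t < s (N - 1 + 1))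
    omega
  · refine or_iff_not_imp_left.2 fun hi0 => ?_
    have hprev := Nat.find_min hex (Nat.sub_one_lt hi0)
    rw [Nat.sub_add_cancel (Nat.pos_of_ne_zero hi0), not_or, not_lt] at hprev
    exact hprev.2

theorem abs_sub_le_of_grid {F G : ℝ → ℝ} (hF : Antitone F) (hG : Antitone G)
    (hF01 : ∀ t, F t ∈ Set.Icc 0 1) (hG01 : ∀ t, G t ∈ Set.Icc 0 1) {N : ℕ} (hN : 0 < N)
    {s : ℕ → ℝ} (hs : ∀ i ∈ Finset.Ioo 0 N, G (s i) = 1 - i / N) {M : ℝ} (hM0 : 0 ≤ M)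
    (hM : ∀ i ∈ Finset.Ioo 0 N, |F (s i) - G (s i)| ≤ M) (t : ℝ) :
    |F t - G t| ≤ M + 1 / N := by
  obtain ⟨i, hiN, hlo, hhi⟩ := exists_grid_bracket s hN t
  obtain ⟨fu, gu, hFu, hGu, hMu, rfl⟩ :
      ∃ fu gu, F t ≤ fu ∧ G t ≤ gu ∧ |fu - gu| ≤ M ∧ gu = 1 - i / N := by
    by_cases hi0 : i = 0
    · exact ⟨1, 1, (hF01 t).2, (hG01 t).2, by simpa using hM0, by simp [hi0]⟩
    · have hi : i ∈ Finset.Ioo 0 N := Finset.mem_Ioo.2 ⟨Nat.pos_of_ne_zero hi0, hiN⟩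
      have hle := hlo.resolve_left hi0
      exact ⟨F (s i), G (s i), hF hle, hG hle, hM i hi, hs i hi⟩
  obtain ⟨fl, gl, hFl, hGl, hMl, rfl⟩ :
      ∃ fl gl, fl ≤ F t ∧ gl ≤ G t ∧ |fl - gl| ≤ M ∧ gl = 1 - (i + 1 : ℕ) / N := by
    by_cases hiN' : i + 1 = N
    · exact ⟨0, 0, (hF01 t).1, (hG01 t).1, by simpa using hM0, by
        rw [hiN', div_self (by positivity)]; ring⟩
    · have hi : i + 1 ∈ Finset.Ioo 0 N := Finset.mem_Ioo.2 ⟨i.succ_pos, by omega⟩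
      have hlt := (hhi.resolve_left hiN').le
      exact ⟨F (s (i + 1)), G (s (i + 1)), hF hlt, hG hlt, hM _ hi, hs _ hi⟩
  have hgap : (1 - i / N : ℝ) - (1 - (i + 1 : ℕ) / N) = 1 / N := by push_cast; ring
  rw [abs_sub_le_iff] at hMu hMl ⊢
  constructor <;> linarith [hMu.1, hMu.2, hMl.1, hMl.2]

end Grid

section UniformDeviation

variable {Ω : Type*} [MeasurableSpace Ω] {P : Measure Ω} [IsProbabilityMeasure P] {n : ℕ}
  {T : Ω → Fin n → ℝ}

theorem measure_le_abs_empiricalSurvival_sub_le (hn : 0 < n)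
    (hT : ∀ g, Measurable fun ω => T ω g) (t : ℝ) {C : ℝ}
    (hC : ∑ g : Fin n, ∑ g' ∈ Finset.univ.erase g,
      cov16 (fun ω => if t < T ω g then (1 : ℝ) else 0)
        (fun ω => if t < T ω g' then (1 : ℝ) else 0) P ≤ C)
    {a : ℝ} (ha : 0 < a) :
    P {ω | a ≤ |empiricalSurvival (T ω) t - meanSurvival P T t|}
      ≤ ENNReal.ofReal ((n / 4 + C) / (n * a) ^ 2) := by
  have hn' : (0 : ℝ) < n := by exact_mod_cast hn
  have hmeas g : MeasurableSet {ω | t < T ω g} := measurableSet_lt measurable_const (hT g)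
  have hind g : (fun ω => if t < T ω g then (1 : ℝ) else 0) = {ω | t < T ω g}.indicator 1 :=
    funext fun ω => by simp [Set.indicator_apply]
  have hint g :
      ∫ ω, (if t < T ω g then (1 : ℝ) else 0) ∂P = (P {ω | t < T ω g}).toReal := by
    rw [hind g, integral_indicator_one (hmeas g), measureReal_def]
  have key := measure_le_abs_sum_sub_integral_le (P := P)
    (fun g => by rw [hind g]; exact measurable_one.indicator (hmeas g))
    (fun g ω => by split_ifs <;> simp) hC (mul_pos hn' ha)
  rw [Fintype.card_fin] at key
  refine le_trans (measure_mono fun ω (hω : a ≤ _) => ?_) key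
  rw [empiricalSurvival_eq_sum, meanSurvival, ← mul_sub, abs_mul, abs_of_pos (by positivity),
    one_div_mul_eq_div, le_div_iff₀ hn', mul_comm] at hω
  simpa only [Set.mem_ofPred_eq, hint] using hω

theorem measure_lt_iSup_abs_empiricalSurvival_sub_le (hn : 0 < n)
    (hT : ∀ g, Measurable fun ω => T ω g) (hcont : Continuous (meanSurvival P T)) {C : ℝ}
    (hC : ∀ t, ∑ g : Fin n, ∑ g' ∈ Finset.univ.erase g,
      cov16 (fun ω => if t < T ω g then (1 : ℝ) else 0)
        (fun ω => if t < T ω g' then (1 : ℝ) else 0) P ≤ C)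
    {N : ℕ} (hN : 0 < N) {a : ℝ} (ha : 0 < a) :
    P {ω | a + 1 / N < ⨆ t, |empiricalSurvival (T ω) t - meanSurvival P T t|}
      ≤ ENNReal.ofReal (N * ((n / 4 + C) / (n * a) ^ 2)) := by
  have hlevel : ∀ i ∈ Finset.Ioo 0 N, (1 - i / N : ℝ) ∈ Set.Ioo 0 1 := fun i hi => by
    obtain ⟨hi0, hiN⟩ := Finset.mem_Ioo.1 hi
    have : (i / N : ℝ) ∈ Set.Ioo 0 1 :=
      ⟨by positivity, (div_lt_one (by positivity)).2 (by exact_mod_cast hiN)⟩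
    constructor <;> linarith [this.1, this.2]
  choose! s hs using fun i hi => exists_meanSurvival_eq hn hT hcont (hlevel i hi)
  have hsub : {ω | a + 1 / N < ⨆ t, |empiricalSurvival (T ω) t - meanSurvival P T t|} ⊆
      ⋃ i ∈ Finset.Ioo 0 N,
        {ω | a ≤ |empiricalSurvival (T ω) (s i) - meanSurvival P T (s i)|} := by
    intro ω hω
    by_contra hgrid
    simp only [Set.mem_iUnion, Set.mem_ofPred_eq, not_exists, not_le] at hgrid
    refine (not_le.2 hω) (ciSup_le fun t => abs_sub_le_of_grid (antitone_empiricalSurvival _)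
      (antitone_meanSurvival hT) (empiricalSurvival_mem_Icc _) meanSurvival_mem_Icc hN hs
      ha.le (fun i hi => (hgrid i hi).le) t)
  calc _ ≤ ∑ i ∈ Finset.Ioo 0 N,
        P {ω | a ≤ |empiricalSurvival (T ω) (s i) - meanSurvival P T (s i)|} :=
        (measure_mono hsub).trans (measure_biUnion_finset_le _ _)
    _ ≤ ∑ _i ∈ Finset.Ioo 0 N, ENNReal.ofReal ((n / 4 + C) / (n * a) ^ 2) :=
        Finset.sum_le_sum fun i _ => measure_le_abs_empiricalSurvival_sub_le hn hT _ (hC _) ha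
    _ ≤ ∑ _i ∈ Finset.range N, ENNReal.ofReal ((n / 4 + C) / (n * a) ^ 2) :=
        Finset.sum_le_sum_of_subset fun i hi => Finset.mem_range.2 (Finset.mem_Ioo.1 hi).2
    _ = ENNReal.ofReal (N * ((n / 4 + C) / (n * a) ^ 2)) := by
        rw [Finset.sum_const, Finset.card_range, nsmul_eq_mul, ENNReal.ofReal_mul (by positivity),
          ENNReal.ofReal_natCast]

end UniformDeviation

lemma tendsto_add_rpow_div_sq_atTop {lam : ℝ} (hlam : lam < 2) (c : ℝ) :
    Tendsto (fun x : ℝ => (x / 4 + c * x ^ lam) / x ^ 2) atTop (𝓝 0) := by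
  have hlim :
      Tendsto (fun x : ℝ => x⁻¹ / 4 + c * x ^ (lam - 2)) atTop (𝓝 (0 / 4 + c * 0)) := by
    refine (tendsto_inv_atTop_zero.div_const 4).add (Tendsto.const_mul c ?_)
    simpa using tendsto_rpow_neg_atTop (show 0 < 2 - lam by linarith)
  rw [zero_div, mul_zero, add_zero] at hlim
  refine hlim.congr' ((eventually_gt_atTop 0).mono fun x hx => ?_)
  rw [Real.rpow_sub hx, Real.rpow_two]
  field_simp

namespace ProbabilityTheory.IdentDistrib

variable {Ω Ω' : Type*} [MeasurableSpace Ω] [MeasurableSpace Ω'] {μ : Measure Ω}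
  {ν : Measure Ω'}

lemma cov16_comp_eq {α : Type*} [MeasurableSpace α] {X : Ω → α} {Y : Ω' → α}
    (h : IdentDistrib X Y μ ν) {f g : α → ℝ} (hf : Measurable f) (hg : Measurable g) :
    cov16 (fun ω => f (X ω)) (fun ω => g (X ω)) μ
      = cov16 (fun ω => f (Y ω)) (fun ω => g (Y ω)) ν := by
  have hf' := (h.comp hf).integral_eq
  have hg' := (h.comp hg).integral_eq
  have hfg := (h.comp (hf.mul hg)).integral_eq
  simp only [Function.comp_def, Pi.mul_apply] at hf' hg' hfg
  simp only [cov16, hf', hg', hfg]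

lemma meanSurvival_eq {n : ℕ} {T : Ω → Fin n → ℝ} {T' : Ω' → Fin n → ℝ}
    (h : IdentDistrib T T' μ ν) : meanSurvival μ T = meanSurvival ν T' := by
  ext t
  unfold meanSurvival
  congr 2 with g
  exact congrArg ENNReal.toReal
    (h.measure_mem_eq (measurable_pi_apply g measurableSet_Ioi))

end ProbabilityTheory.IdentDistrib

theorem tendsto_measure_lt_iSup_abs_empiricalSurvival_sub {n : ℕ → ℕ}
    (hn : Tendsto n atTop atTop) {Ω : ℕ → Type*} [∀ k, MeasurableSpace (Ω k)]
    {P : (k : ℕ) → Measure (Ω k)} [∀ k, IsProbabilityMeasure (P k)]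
    {T : (k : ℕ) → Ω k → Fin (n k) → ℝ} (hT : ∀ k g, Measurable fun ω => T k ω g)
    (hcont : ∀ k, Continuous (meanSurvival (P k) (T k)))
    {c lam : ℝ} (hlam : lam < 2)
    (hdep : ∀ k t, ∑ g : Fin (n k), ∑ g' ∈ Finset.univ.erase g,
      cov16 (fun ω => if t < T k ω g then (1 : ℝ) else 0)
        (fun ω => if t < T k ω g' then (1 : ℝ) else 0) (P k) ≤ c * (n k : ℝ) ^ lam)
    {ε : ℝ} (hε : 0 < ε) :
    Tendsto (fun k => P k {ω | ε <
      ⨆ t, |empiricalSurvival (T k ω) t - meanSurvival (P k) (T k) t|}) atTop (𝓝 0) := by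
  obtain ⟨N, hN⟩ := exists_nat_one_div_lt hε
  obtain ⟨a, ha, hεa⟩ : ∃ a, 0 < a ∧ ε = a + 1 / ((N + 1 : ℕ) : ℝ) :=
    ⟨ε - 1 / ((N + 1 : ℕ) : ℝ), by push_cast; linarith, by ring⟩
  have hbound : Tendsto (fun k => ENNReal.ofReal ((N + 1 : ℕ) *
      ((n k / 4 + c * (n k : ℝ) ^ lam) / (n k * a) ^ 2))) atTop (𝓝 0) := by
    rw [← ENNReal.ofReal_zero, ← mul_zero ((N + 1 : ℕ) : ℝ), ← zero_div (a ^ 2)]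
    refine ENNReal.tendsto_ofReal (Tendsto.congr (fun k => ?_) ((((tendsto_add_rpow_div_sq_atTop
      hlam c).comp (tendsto_natCast_atTop_atTop.comp hn)).div_const _).const_mul _))
    simp only [Function.comp_apply, mul_pow, div_mul_eq_div_div]
  refine tendsto_of_tendsto_of_tendsto_of_le_of_le' tendsto_const_nhds hbound
    (Eventually.of_forall fun _ => zero_le) ?_
  filter_upwards [hn.eventually_ge_atTop 1] with k hk
  rw [hεa]
  exact measure_lt_iSup_abs_empiricalSurvival_sub_le hk (hT k) (hcont k) (hdep k)
    N.succ_pos ha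

theorem stmt16 (n : ℕ → ℕ) (hn : Tendsto n atTop atTop)
    (Ω : ℕ → Type) [∀ k, MeasurableSpace (Ω k)]
    (P : (k : ℕ) → Measure (Ω k)) [∀ k, IsProbabilityMeasure (P k)]
    (T : (k : ℕ) → Ω k → Fin (n k) → ℝ)
    (hmeas : ∀ k g, Measurable fun ω => T k ω g)
    (L : ℕ → ℝ → ℝ)
    (hL : ∀ k t, L k t = (1 / (n k : ℝ)) * ∑ g : Fin (n k), (P k {ω | t < T k ω g}).toReal)
    (hLcont : ∀ k, Continuous fun t => L k t)
    (hdep : ∃ c > (0 : ℝ), ∃ lam ∈ Set.Ioo (0 : ℝ) 2, ∀ k (t : ℝ),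
      ∑ g : Fin (n k), ∑ g' ∈ Finset.univ.erase g,
        cov16 (fun ω => if t < T k ω g then (1 : ℝ) else 0)
              (fun ω => if t < T k ω g' then (1 : ℝ) else 0) (P k) ≤
        c * ((n k : ℝ)) ^ lam) :
    (∀ ε > (0 : ℝ), Tendsto (fun k => P k {ω | ε <
        ⨆ t : ℝ, |(1 / (n k : ℝ)) *
          ((Finset.univ.filter fun g : Fin (n k) => t < T k ω g).card : ℝ) - L k t|})
      atTop (nhds 0)) ∧
    ((∀ k, IdentDistrib (fun ω => fun g : Fin (n k) => T k ω g)
        (fun ω => fun g : Fin (n k) => -(T k ω g)) (P k) (P k)) →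
      ∀ ε > (0 : ℝ), Tendsto (fun k => P k {ω | ε <
        ⨆ t : ℝ, |(1 / (n k : ℝ)) *
          ((Finset.univ.filter fun g : Fin (n k) => T k ω g < -t).card : ℝ) - L k t|})
      atTop (nhds 0)) := by
  obtain ⟨c, -, lam, ⟨-, hlam⟩, hdep⟩ := hdep
  have hLeq k : L k = meanSurvival (P k) (T k) := funext (hL k)
  simp only [hLeq] at hLcont ⊢
  refine ⟨fun ε hε => tendsto_measure_lt_iSup_abs_empiricalSurvival_sub hn hmeas hLcont hlam
    hdep hε, fun hsym ε hε => ?_⟩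
  have hmean k : meanSurvival (P k) (fun ω g => -T k ω g) = meanSurvival (P k) (T k) :=
    (hsym k).symm.meanSurvival_eq
  have hind k t (g : Fin (n k)) :
      Measurable fun x : Fin (n k) → ℝ => if t < x g then (1 : ℝ) else 0 :=
    Measurable.ite (measurableSet_lt measurable_const (measurable_pi_apply g)) measurable_const
      measurable_const
  have hdep' k t : ∑ g : Fin (n k), ∑ g' ∈ Finset.univ.erase g,
      cov16 (fun ω => if t < -T k ω g then (1 : ℝ) else 0)
        (fun ω => if t < -T k ω g' then (1 : ℝ) else 0) (P k) ≤ c * (n k : ℝ) ^ lam :=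
    (hdep k t).trans_eq' <| Finset.sum_congr rfl fun g _ => Finset.sum_congr rfl fun g' _ =>
      (hsym k).cov16_comp_eq (hind k t g) (hind k t g')
  have hempirical k ω t : empiricalSurvival (fun g => -T k ω g) t
      = (1 / (n k : ℝ)) *
        ((Finset.univ.filter fun g : Fin (n k) => T k ω g < -t).card : ℝ) := by
    simp only [empiricalSurvival, lt_neg]
  simpa only [hmean, hempirical] using tendsto_measure_lt_iSup_abs_empiricalSurvival_sub hn
    (T := fun k ω g => -T k ω g) (fun k g => (hmeas k g).neg) (fun k => hmean k ▸ hLcont k) hlam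
    hdep' hε
end

section
/- In the multilayer e-filter setting, assume the layer-1 partition is into singletons (A_j^(1) = {j} for all j, so G^(1) = N). Fix levels γ^(1),…,γ^(M) ∈ (0,1). Let S ⊆ [N] be a selected feature set, for each m ∈ [M] let S^[m] = {g ∈ [G^(m)] : A_g^(m) ∩ S ≠ ∅} be the induced group selection, and let V̂^(m) ≥ 0 satisfy the per-layer estimated-FDP constraint max(V̂^(m), γ^(m)) / (|S^[m]| ∨ 1) ≤ γ^(m). Define the generalized e-values e_g^(m) = G^(m)·1{g ∈ S^[m]}/max(V̂^(m), γ^(m)). Then the generalized e-filter applied to these e-values at levels γ^(1),…,γ^(M) outputs exactly the set S. -/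
open scoped ENNReal
open Filter MeasureTheory

namespace MultilayerEFilter

/-!
STATEMENT 18 (Theorem 4 of the supplementary material).

Assume the layer-1 partition is into singletons.  Let `S ⊆ [N]` be a selected
feature set with induced group selections `S^[m]`, and suppose the per-layer
estimated-FDP constraint `max(V̂^(m), γ^(m)) / (|S^[m]| ∨ 1) ≤ γ^(m)` holds.  Then
the generalized e-filter applied to the one-bit generalized e-values
`e_g^(m) = G^(m)·1{g ∈ S^[m]}/max(V̂^(m), γ^(m))` at levels `γ^(1),…,γ^(M)`
outputs exactly the set `S`.
-/

theorem stmt18 {N M : ℕ} (hN : 1 ≤ N) (hM : 1 ≤ M) {G : Fin M → ℕ}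
    (A : (m : Fin M) → Fin (G m) → Finset (Fin N))
    (h : (m : Fin M) → Fin N → Fin (G m))
    (hne : ∀ m g, (A m g).Nonempty)
    (hdisj : ∀ m, ∀ g₁ g₂ : Fin (G m), g₁ ≠ g₂ → Disjoint (A m g₁) (A m g₂))
    (hmem : ∀ m j, j ∈ A m (h m j))
    -- the layer-1 partition is into singletons
    (hsing : ∀ g : Fin (G ⟨0, hM⟩), ∃ j : Fin N, A ⟨0, hM⟩ g = {j})
    (γ : Fin M → ℝ) (hγ : ∀ m, γ m ∈ Set.Ioo (0 : ℝ) 1)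
    (S : Finset (Fin N))
    (V : Fin M → ℝ) (hV : ∀ m, 0 ≤ V m)
    (hcon : ∀ m, max (V m) (γ m) / ((max (selGrp A S m).card 1 : ℕ) : ℝ) ≤ γ m) :
    output A h (fun m g => ENNReal.ofReal
      ((G m : ℝ) * (if g ∈ selGrp A S m then 1 else 0) / max (V m) (γ m))) γ = S := by
  set e : (m : Fin M) → Fin (G m) → ℝ≥0∞ := fun m g => ENNReal.ofReal
      ((G m : ℝ) * (if g ∈ selGrp A S m then 1 else 0) / max (V m) (γ m)) with he
  set m0 : Fin M := ⟨0, hM⟩ with hm0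
  have hGpos : ∀ m, 0 < G m := fun m => Fin.pos (h m ⟨0, hN⟩)
  have hmaxpos : ∀ m, 0 < max (V m) (γ m) := fun m => lt_max_of_lt_right (hγ m).1
  have hk : ∀ m, (0:ℝ) < ((max (selGrp A S m).card 1 : ℕ) : ℝ) := by
    intro m
    have : 0 < max (selGrp A S m).card 1 := lt_of_lt_of_le Nat.zero_lt_one (le_max_right _ _)
    exact_mod_cast this
  have hcardle : ∀ m, (max (selGrp A S m).card 1) ≤ G m := by
    intro m
    have h1 : (selGrp A S m).card ≤ G m := by
      have := Finset.card_le_card (Finset.subset_univ (selGrp A S m))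
      simpa using this
    exact max_le h1 (hGpos m)
  have hmaxle : ∀ m, max (V m) (γ m) ≤ γ m * ((max (selGrp A S m).card 1 : ℕ) : ℝ) := by
    intro m
    have := hcon m
    rw [div_le_iff₀ (hk m)] at this
    linarith
  have hmaxltG : ∀ m, max (V m) (γ m) < (G m : ℝ) := by
    intro m
    have hkG : ((max (selGrp A S m).card 1 : ℕ) : ℝ) ≤ (G m : ℝ) := by
      exact_mod_cast hcardle m
    have h1 : γ m * ((max (selGrp A S m).card 1 : ℕ) : ℝ) < 1 * ((max (selGrp A S m).card 1 : ℕ) : ℝ) :=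
      mul_lt_mul_of_pos_right (hγ m).2 (hk m)
    calc max (V m) (γ m) ≤ γ m * ((max (selGrp A S m).card 1 : ℕ) : ℝ) := hmaxle m
      _ < 1 * ((max (selGrp A S m).card 1 : ℕ) : ℝ) := h1
      _ ≤ (G m : ℝ) := by rw [one_mul]; exact hkG
  -- the common e-value of all selected groups at layer m
  set Emax : Fin M → ℝ≥0∞ := fun m => ENNReal.ofReal ((G m : ℝ) / max (V m) (γ m)) with hEmax
  have hE1 : ∀ m, 1 ≤ Emax m := by
    intro m
    rw [hEmax]
    rw [ENNReal.one_le_ofReal]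
    rw [le_div_iff₀ (hmaxpos m)]
    rw [one_mul]
    exact le_of_lt (hmaxltG m)
  have heval : ∀ m (g : Fin (G m)), g ∈ selGrp A S m → e m g = Emax m := by
    intro m g hg
    simp only [he, hEmax, if_pos hg, mul_one]
  have heval0 : ∀ m (g : Fin (G m)), g ∉ selGrp A S m → e m g = 0 := by
    intro m g hg
    simp only [he, if_neg hg, mul_zero, zero_div, ENNReal.ofReal_zero]
  -- layer-1 groups are singletons: A m0 (h m0 j) = {j}
  have hA0 : ∀ j : Fin N, A m0 (h m0 j) = {j} := by
    intro j
    obtain ⟨j', hj'⟩ := hsing (h m0 j)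
    have hjmem := hmem m0 j
    rw [hj', Finset.mem_singleton] at hjmem
    rw [hj', hjmem]
  have hgrp0 : ∀ j : Fin N, h m0 j ∈ selGrp A S m0 ↔ j ∈ S := by
    intro j
    simp only [selGrp, Finset.mem_filter, Finset.mem_univ, true_and, hA0 j,
      Finset.mem_singleton]
    constructor
    · rintro ⟨k, rfl, hk⟩; exact hk
    · intro hj; exact ⟨j, rfl, hj⟩
  have hgrpmem : ∀ m (j : Fin N), j ∈ S → h m j ∈ selGrp A S m := by
    intro m j hj
    simp only [selGrp, Finset.mem_filter, Finset.mem_univ, true_and]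
    exact ⟨j, hmem m j, hj⟩
  -- the selection set equals S for any admissible-range threshold
  have hselS : ∀ t : Fin M → ℝ≥0∞, (∀ m, 1 ≤ t m) → (∀ m, t m ≤ Emax m) →
      sel h e t = S := by
    intro t ht1 htE
    ext j
    simp only [sel, Finset.mem_filter, Finset.mem_univ, true_and]
    constructor
    · intro hj
      by_contra hjS
      have hg0 : h m0 j ∉ selGrp A S m0 := fun hc => hjS ((hgrp0 j).mp hc)
      have := hj m0
      rw [heval0 m0 _ hg0] at this
      exact absurd (le_trans (ht1 m0) this) (by simp)
    · intro hj m
      rw [heval m _ (hgrpmem m j hj)]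
      exact htE m
  -- the candidate threshold t* = Emax is admissible
  have hselE : sel h e Emax = S := hselS Emax hE1 (fun m => le_refl _)
  have hFDPE : ∀ m, FDPhat A h e Emax m ≤ ENNReal.ofReal (γ m) := by
    intro m
    rw [FDPhat, hselE]
    have hGE : (G m : ℝ≥0∞) / Emax m = ENNReal.ofReal (max (V m) (γ m)) := by
      rw [hEmax]
      rw [← ENNReal.ofReal_natCast (G m)]
      rw [← ENNReal.ofReal_div_of_pos (div_pos (by exact_mod_cast hGpos m) (hmaxpos m))]
      congr 1
      rw [div_div_eq_mul_div, mul_comm, mul_div_assoc,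
        div_self (by exact_mod_cast (hGpos m).ne' : (G m : ℝ) ≠ 0), mul_one]
    rw [hGE, ← ENNReal.ofReal_natCast (max (selGrp A S m).card 1),
      ← ENNReal.ofReal_div_of_pos (hk m)]
    exact ENNReal.ofReal_le_ofReal (hcon m)
  have hadm : Emax ∈ admissible A h e γ := ⟨hE1, hFDPE⟩
  -- bounds on the filter threshold
  have hthle : ∀ m, filterThreshold A h e γ m ≤ Emax m := by
    intro m
    exact sInf_le ⟨Emax, hadm, rfl⟩
  have hth1 : ∀ m, 1 ≤ filterThreshold A h e γ m := by
    intro m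
    apply le_sInf
    rintro s ⟨t, ht, rfl⟩
    exact ht.1 m
  -- conclude
  show sel h e (filterThreshold A h e γ) = S
  exact hselS _ hth1 hthle

end MultilayerEFilter
end
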